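/- arXiv:2207.14253 — 4 statements merged into one kernel-verified Lean document; each statement's English description precedes it below -/
import Mathlib

section
/- For all positive integers m and n, the partial permutohedron P(m,n) is a simple polytope; concretely, every extreme point of P(m,n) is contained in exactly m faces of dimension m−1. -/
/-!
A vertex `v` of a convex set `P` in an `m`-dimensional space is simple as soon as there are `m`
valid inequalities `L i x ≤ L i v` and points `w i ∈ P` lying on all of them except the `i`-th,
which `w i` satisfies strictly. In the coordinates dual to the edge vectors `w i - v`, the set `P`
then lies in the nonnegative orthant at `v` and contains the simplex spanned by `v` and the `w i`.
Consequently every face through `v` is cut out by the inequalities it makes tight, say those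
indexed by `I`, and it contains `v` and the `w j` with `j ∉ I`, so it has dimension `m - #I`. The
faces of dimension `m - 1` through `v` are then the `m` faces with `#I = 1`.

At an extreme point `v` of `P(m,n)` the nonzero entries are distinct and form a final segment
`{n + 1 - k, …, n}` of `{1, …, n}`: a value `a` whose successor `a + 1 ≤ n` is missing could be
raised to `a + 1` or lowered to `0`, which writes `v` as a proper convex combination. The
inequalities are `x j ≥ 0` where `v j = 0`, and `∑ x t ≤ v j + ⋯ + n` over the `t` with
`v t ≥ v j` where `v j ≠ 0` (valid because the nonzero entries of a vertex are distinct). The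
point `w i` moves entry `i` one step towards `0` (or from `0` to `1`), exchanging values with the
entry that held the target value, if any.
-/

/-- The vertex set of the partial permutohedron: vectors in `{0,1,…,n}^m`
whose nonzero entries are pairwise distinct. -/
def ppVertices (m n : ℕ) : Set (Fin m → ℝ) :=
  {x | (∀ i, ∃ k : ℕ, k ≤ n ∧ x i = k) ∧
       ∀ i j : Fin m, i ≠ j → x i ≠ 0 → x j ≠ 0 → x i ≠ x j}

/-- The partial permutohedron `P(m,n)`. -/
def partialPermutohedron (m n : ℕ) : Set (Fin m → ℝ) :=
  convexHull ℝ (ppVertices m n)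

open Module

theorem Convex.add_sum_smul_sub_mem {ι E : Type*} [Fintype ι] [AddCommGroup E] [Module ℝ E]
    {S : Set E} (hS : Convex ℝ S) {v : E} (hv : v ∈ S) {z : ι → E} {a : ι → ℝ}
    (ha : ∀ i, 0 ≤ a i) (hsum : ∑ i, a i ≤ 1) (hz : ∀ i, a i ≠ 0 → z i ∈ S) :
    v + ∑ i, a i • (z i - v) ∈ S := by
  classical
  let z' : ι → E := fun i => if a i = 0 then v else z i
  have hz' : ∑ i, a i • z' i = ∑ i, a i • z i :=
    Finset.sum_congr rfl fun i _ => by by_cases h : a i = 0 <;> simp [z', h]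
  have hcomb := hS.sum_mem (t := Finset.univ)
    (w := fun o : Option ι => o.elim (1 - ∑ i, a i) a) (z := fun o => o.elim v z')
    (by rintro (_ | i) _ <;> simp [ha, hsum]) (by simp [Fintype.sum_option])
    (by rintro (_ | i) -; exacts [hv, by by_cases h : a i = 0 <;> simp [z', h, hv, hz]])
  convert hcomb using 1
  simp only [Fintype.sum_option, Option.elim, hz', smul_sub, Finset.sum_sub_distrib,
    ← Finset.sum_smul, sub_smul, one_smul]
  abel

variable {ι E : Type*} [AddCommGroup E] [Module ℝ E]

structure SimpleVertexCertificate (P : Set E) (v : E) (ι : Type*) where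
  L : ι → Dual ℝ E
  w : ι → E
  le_of_mem : ∀ i, ∀ x ∈ P, L i x ≤ L i v
  w_mem : ∀ i, w i ∈ P
  apply_w_of_ne : ∀ ⦃i j⦄, i ≠ j → L i (w j) = L i v
  apply_w_lt : ∀ i, L i (w i) < L i v

namespace SimpleVertexCertificate

variable {P : Set E} {v : E} (C : SimpleVertexCertificate P v ι)

def edge (i : ι) : E := C.w i - v

noncomputable def coord (i : ι) : Dual ℝ E := (C.L i (C.edge i))⁻¹ • C.L i

theorem apply_edge_lt_zero (i : ι) : C.L i (C.edge i) < 0 := by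
  simpa [edge] using C.apply_w_lt i

theorem coord_edge [DecidableEq ι] (i j : ι) :
    C.coord i (C.edge j) = if i = j then 1 else 0 := by
  split_ifs with h
  · subst h
    simp [coord, (C.apply_edge_lt_zero i).ne]
  · simp [coord, edge, C.apply_w_of_ne h]

theorem coord_sub_nonneg {x : E} (hx : x ∈ P) (i : ι) : 0 ≤ C.coord i (x - v) := by
  have hcoord : C.coord i (x - v) = (C.L i (C.edge i))⁻¹ * (C.L i x - C.L i v) := by
    simp [coord, mul_sub]
  rw [hcoord]
  exact mul_nonneg_of_nonpos_of_nonpos (inv_nonpos.2 (C.apply_edge_lt_zero i).le)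
    (sub_nonpos.2 (C.le_of_mem i x hx))

theorem coord_sub_eq_zero_iff {x : E} (i : ι) :
    C.coord i (x - v) = 0 ↔ C.L i x = C.L i v := by
  simp [coord, (C.apply_edge_lt_zero i).ne, sub_eq_zero]

def face (I : Finset ι) : Set E := {x ∈ P | ∀ i ∈ I, C.L i x = C.L i v}

theorem isExtreme_face (I : Finset ι) : IsExtreme ℝ P (C.face I) := by
  refine ⟨fun x hx => hx.1, fun x₁ hx₁ x₂ hx₂ x hx hseg => ⟨hx₁, fun i hi => ?_⟩⟩
  obtain ⟨a, b, ha, hb, hab, rfl⟩ := hseg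
  have hx := hx.2 i hi
  simp only [map_add, map_smul, smul_eq_mul] at hx
  have h₁ := C.le_of_mem i x₁ hx₁
  have h₂ := C.le_of_mem i x₂ hx₂
  nlinarith [congrArg (· * C.L i v) hab]

theorem convex_face (hP : Convex ℝ P) (I : Finset ι) : Convex ℝ (C.face I) := by
  refine fun x hx y hy a b ha hb hab => ⟨hP hx.1 hy.1 ha hb hab, fun i hi => ?_⟩
  simp only [map_add, map_smul, smul_eq_mul, hx.2 i hi, hy.2 i hi]
  linear_combination C.L i v * hab

theorem mem_face (hv : v ∈ P) (I : Finset ι) : v ∈ C.face I := ⟨hv, fun _ _ => rfl⟩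

theorem w_mem_face {I : Finset ι} {j : ι} (hj : j ∉ I) : C.w j ∈ C.face I :=
  ⟨C.w_mem j, fun _ hi => C.apply_w_of_ne fun h => hj (h ▸ hi)⟩

theorem face_singleton_injective : Function.Injective fun i => C.face {i} := by
  intro i j hij
  by_contra h
  have hj := C.w_mem_face (I := {i}) (Finset.notMem_singleton.2 (Ne.symm h))
  rw [show C.face {i} = C.face {j} from hij] at hj
  exact (C.apply_w_lt j).ne (hj.2 j (Finset.mem_singleton_self j))

variable [Fintype ι]

theorem coord_sum_smul_edge (i : ι) (a : ι → ℝ) : C.coord i (∑ j, a j • C.edge j) = a i := by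
  classical
  simp [map_sum, C.coord_edge]

theorem linearIndependent_edge : LinearIndependent ℝ C.edge :=
  Fintype.linearIndependent_iff.2 fun a ha i => by
    simpa [ha] using (C.coord_sum_smul_edge i a).symm

variable [FiniteDimensional ℝ E]

theorem sum_coord_smul_edge (hcard : Fintype.card ι = finrank ℝ E) (d : E) :
    ∑ i, C.coord i d • C.edge i = d := by
  have hd : d ∈ Submodule.span ℝ (Set.range C.edge) := by
    rw [C.linearIndependent_edge.span_eq_top_of_card_eq_finrank' hcard]
    trivial
  obtain ⟨a, rfl⟩ := (Submodule.mem_span_range_iff_exists_fun ℝ).1 hd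
  simp_rw [C.coord_sum_smul_edge]

theorem add_mem_of_coord (hcard : Fintype.card ι = finrank ℝ E) {S : Set E} (hS : Convex ℝ S)
    (hv : v ∈ S) {d : E} (hd : ∀ i, 0 ≤ C.coord i d) (hsum : ∑ i, C.coord i d ≤ 1)
    (hw : ∀ i, C.coord i d ≠ 0 → C.w i ∈ S) : v + d ∈ S := by
  rw [← C.sum_coord_smul_edge hcard d]
  exact hS.add_sum_smul_sub_mem hv hd hsum hw

theorem direction_face (hcard : Fintype.card ι = finrank ℝ E) (hv : v ∈ P) (I : Finset ι) :
    (affineSpan ℝ (C.face I)).direction =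
      Submodule.span ℝ (Set.range fun j : {j // j ∉ I} => C.edge j) := by
  rw [direction_affineSpan, vectorSpan_eq_span_vsub_set_right ℝ (C.mem_face hv I)]
  refine le_antisymm (Submodule.span_le.2 ?_) (Submodule.span_mono ?_)
  · rintro _ ⟨x, hx, rfl⟩
    change x - v ∈ _
    rw [← C.sum_coord_smul_edge hcard (x - v)]
    refine Submodule.sum_mem _ fun i _ => ?_
    by_cases hi : i ∈ I
    · simp [(C.coord_sub_eq_zero_iff i).2 (hx.2 i hi)]
    · exact Submodule.smul_mem _ _ (Submodule.subset_span ⟨⟨i, hi⟩, rfl⟩)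
  · rintro _ ⟨j, rfl⟩
    exact ⟨C.w j, C.w_mem_face j.2, rfl⟩

theorem finrank_direction_face (hcard : Fintype.card ι = finrank ℝ E) (hv : v ∈ P)
    (I : Finset ι) :
    finrank ℝ (affineSpan ℝ (C.face I)).direction = Fintype.card ι - I.card := by
  classical
  rw [C.direction_face hcard hv, finrank_span_eq_card (b := fun j : {j // j ∉ I} => C.edge j)
    (C.linearIndependent_edge.comp _ Subtype.val_injective)]
  simp

theorem w_mem_of_lt (hcard : Fintype.card ι = finrank ℝ E) (hP : Convex ℝ P) {F : Set E}
    (hFc : Convex ℝ F) (hF : IsExtreme ℝ P F) (hvF : v ∈ F) {x : E} (hx : x ∈ F) {j : ι}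
    (hj : C.L j x < C.L j v) : C.w j ∈ F := by
  classical
  set c : ι → ℝ := fun i => C.coord i (x - v)
  have hc : ∀ i, 0 ≤ c i := C.coord_sub_nonneg (hF.subset hx)
  have hcj : 0 < c j := (hc j).lt_of_ne (Ne.symm (mt (C.coord_sub_eq_zero_iff j).1 hj.ne))
  set S := ∑ i, c i
  have hcS : c j ≤ S := Finset.single_le_sum (fun i _ => hc i) (Finset.mem_univ j)
  have hS : 0 < S + 1 := by linarith
  have hD : 0 < S + 1 - c j := by linarith
  -- `v + (S + 1)⁻¹ • (x - v) ∈ F` lies strictly between `w j` and `v + d ∈ P`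
  set d := (S + 1 - c j)⁻¹ • (x - v - c j • C.edge j)
  have hcd : ∀ i, C.coord i d = (S + 1 - c j)⁻¹ * (c i - if i = j then c j else 0) :=
    fun i => by simp [d, C.coord_edge, c, mul_sub]
  have hd : v + d ∈ P := by
    refine C.add_mem_of_coord hcard hP (hF.subset hvF) (fun i => ?_) ?_ fun i _ => C.w_mem i
    · rw [hcd]
      split_ifs with h
      · simp [h]
      · exact mul_nonneg (inv_nonneg.2 hD.le) ((sub_zero (c i)).symm ▸ hc i)
    · simp only [hcd, ← Finset.mul_sum, Finset.sum_sub_distrib, Finset.sum_ite_eq',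
        Finset.mem_univ, if_true]
      rw [inv_mul_le_iff₀ hD]
      linarith
  have hy : v + (S + 1)⁻¹ • (x - v) ∈ F :=
    hFc.add_smul_sub_mem hvF hx ⟨by positivity, inv_le_one_of_one_le₀ (by linarith)⟩
  refine hF.left_mem_of_mem_openSegment (C.w_mem j) hd hy
    ⟨c j / (S + 1), (S + 1 - c j) / (S + 1), by positivity, by positivity,
      by field_simp; ring, ?_⟩
  simp only [d, edge]
  match_scalars <;> field_simp <;> ring

theorem exists_eq_face (hcard : Fintype.card ι = finrank ℝ E) (hP : Convex ℝ P) {F : Set E}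
    (hFc : Convex ℝ F) (hF : IsExtreme ℝ P F) (hvF : v ∈ F) : ∃ I, F = C.face I := by
  classical
  refine ⟨Finset.univ.filter fun i => ∀ x ∈ F, C.L i x = C.L i v, subset_antisymm
    (fun x hx => ⟨hF.subset hx, fun i hi => (Finset.mem_filter.1 hi).2 x hx⟩) fun y hy => ?_⟩
  have hwF : ∀ i, C.coord i (y - v) ≠ 0 → C.w i ∈ F := by
    intro i hi
    obtain ⟨x, hx, hne⟩ : ∃ x ∈ F, C.L i x ≠ C.L i v := by
      by_contra! h
      exact hi ((C.coord_sub_eq_zero_iff i).2 (hy.2 i (by simpa using h)))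
    exact C.w_mem_of_lt hcard hP hFc hF hvF hx
      ((C.le_of_mem i x (hF.subset hx)).lt_of_ne hne)
  -- a small step from `v` towards `y` stays in the simplex spanned by `v` and these `w i`
  have hc := C.coord_sub_nonneg hy.1
  have hS : 1 < ∑ i, C.coord i (y - v) + 2 := by
    linarith [Finset.sum_nonneg fun i (_ : i ∈ Finset.univ) => hc i]
  set s := (∑ i, C.coord i (y - v) + 2)⁻¹
  have hs : 0 < s := inv_pos.2 (by linarith)
  have hz : v + s • (y - v) ∈ F := by
    refine C.add_mem_of_coord hcard hFc hvF (fun i => ?_) ?_ fun i hi => hwF i ?_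
    · simpa using mul_nonneg hs.le (hc i)
    · simp only [map_smul, smul_eq_mul, ← Finset.mul_sum]
      rw [inv_mul_le_iff₀ (by linarith)]
      linarith
    · simpa [hs.ne'] using hi
  refine hF.left_mem_of_mem_openSegment hy.1 (hF.subset hvF) hz ⟨s, 1 - s, hs, ?_, by ring, ?_⟩
  · linarith [inv_lt_one_of_one_lt₀ hS]
  · module

end SimpleVertexCertificate

theorem SimpleVertexCertificate.ncard_facets_containing_vertex [Fintype ι] [Nonempty ι]
    [FiniteDimensional ℝ E] {P : Set E} {v : E} (C : SimpleVertexCertificate P v ι)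
    (hcard : Fintype.card ι = finrank ℝ E) (hP : Convex ℝ P) (hv : v ∈ P) :
    {F : Set E | Convex ℝ F ∧ IsExtreme ℝ P F ∧
        finrank ℝ (affineSpan ℝ F).direction = Fintype.card ι - 1 ∧ v ∈ F}.ncard =
      Fintype.card ι := by
  have hfacets : {F : Set E | Convex ℝ F ∧ IsExtreme ℝ P F ∧
      finrank ℝ (affineSpan ℝ F).direction = Fintype.card ι - 1 ∧ v ∈ F} =
      Set.range fun i => C.face {i} := by
    ext F
    constructor
    · rintro ⟨hFc, hF, hdim, hvF⟩
      obtain ⟨I, rfl⟩ := C.exists_eq_face hcard hP hFc hF hvF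
      rw [C.finrank_direction_face hcard hv] at hdim
      have := I.card_le_univ
      have := Fintype.card_pos (α := ι)
      obtain ⟨i, rfl⟩ := Finset.card_eq_one.1 (by omega : I.card = 1)
      exact ⟨i, rfl⟩
    · rintro ⟨i, rfl⟩
      exact ⟨C.convex_face hP _, C.isExtreme_face _,
        by simp [C.finrank_direction_face hcard hv], C.mem_face hv _⟩
  rw [hfacets, Set.ncard_range_of_injective C.face_singleton_injective, Nat.card_eq_fintype_card]

open Finset Function

theorem Finset.sum_le_sum_range_sub (A : Finset ℕ) (n : ℕ) (hn : ∀ a ∈ A, a ≤ n) :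
    ∑ a ∈ A, a ≤ ∑ i ∈ range #A, (n - i) := by
  induction A using Finset.induction_on_max generalizing n with
  | empty => simp
  | insert a s hlt ih =>
    have ha : a ∉ s := fun h => (hlt a h).false
    have han := hn a (mem_insert_self a s)
    have hs := ih (a - 1) fun x hx => by have := hlt x hx; omega
    have hmono : ∑ i ∈ range #s, (a - 1 - i) ≤ ∑ i ∈ range #s, (n - (i + 1)) :=
      sum_le_sum fun i _ => by omega
    rw [sum_insert ha, card_insert_of_notMem ha, sum_range_succ']
    omega

theorem sum_le_sum_range_sub_of_injOn {ι : Type*} {e : ι → ℕ} {n : ℕ} (hle : ∀ i, e i ≤ n)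
    (hinj : Set.InjOn e (support e)) (T : Finset ι) {c : ℕ} (hc : #T ≤ c ∨ n ≤ c) :
    ∑ t ∈ T, e t ≤ ∑ i ∈ range c, (n - i) := by
  classical
  set A := (T.filter (e · ≠ 0)).image e
  have hA : A ⊆ Icc 1 n := by
    intro a ha
    obtain ⟨t, ht, rfl⟩ := mem_image.1 ha
    simpa [Nat.one_le_iff_ne_zero, hle t] using (mem_filter.1 ht).2
  have hAc : #A ≤ c := by
    rcases hc with hc | hc
    · exact (card_image_le.trans (card_filter_le _ _)).trans hc
    · simpa using (card_le_card hA).trans (by simpa using hc)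
  have hinjT : Set.InjOn e (T.filter (e · ≠ 0)) := fun x hx y hy =>
    hinj (mem_filter.1 hx).2 (mem_filter.1 hy).2
  calc ∑ t ∈ T, e t = ∑ a ∈ A, a := by rw [← sum_filter_ne_zero, sum_image hinjT]
    _ ≤ ∑ i ∈ range #A, (n - i) := A.sum_le_sum_range_sub n fun a ha => (mem_Icc.1 (hA ha)).2
    _ ≤ ∑ i ∈ range c, (n - i) := sum_le_sum_of_subset (range_subset_range.2 hAc)

theorem injOn_support_update {ι M : Type*} [DecidableEq ι] [Zero M] {g : ι → M}
    (hg : Set.InjOn g (support g)) {i : ι} {b : M} (hb : ∀ j ≠ i, g j = b → b = 0) :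
    Set.InjOn (update g i b) (support (update g i b)) := by
  intro s hs t ht hst
  by_contra hne
  simp only [mem_support] at hs ht
  rcases eq_or_ne s i with rfl | hsi
  · rw [update_self] at hs hst
    rw [update_of_ne (Ne.symm hne)] at hst
    exact hs (hb t (Ne.symm hne) hst.symm)
  rcases eq_or_ne t i with rfl | hti
  · rw [update_self] at ht hst
    rw [update_of_ne hne] at hst
    exact ht (hb s hne hst)
  rw [update_of_ne hsi] at hs hst
  rw [update_of_ne hti] at ht hst
  exact hne (hg hs ht hst)

theorem injOn_support_comp_perm {ι M : Type*} [Zero M] {g : ι → M}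
    (hg : Set.InjOn g (support g)) (σ : Equiv.Perm ι) :
    Set.InjOn (g ∘ σ) (support (g ∘ σ)) :=
  fun _ hs _ ht hst => σ.injective (hg hs ht hst)

variable {m n : ℕ}

theorem natCast_mem_ppVertices {g : Fin m → ℕ} (hle : ∀ i, g i ≤ n)
    (hinj : Set.InjOn g (support g)) : (fun i => (g i : ℝ)) ∈ ppVertices m n :=
  ⟨fun i => ⟨g i, hle i, rfl⟩, fun i j hij hi hj h =>
    hij (hinj (by simpa using hi) (by simpa using hj) (by simpa using h))⟩

theorem exists_natCast_eq_of_mem_ppVertices {x : Fin m → ℝ} (hx : x ∈ ppVertices m n) :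
    ∃ g : Fin m → ℕ, (∀ i, g i ≤ n) ∧ Set.InjOn g (support g) ∧ (fun i => (g i : ℝ)) = x := by
  choose g hle hg using hx.1
  refine ⟨g, hle, fun i hi j hj h => ?_, funext fun i => (hg i).symm⟩
  by_contra hij
  exact hx.2 i j hij (by simpa [hg] using hi) (by simpa [hg] using hj) (by simp [hg, h])

structure IsTopArrangement (n : ℕ) (g : Fin m → ℕ) : Prop where
  le : ∀ i, g i ≤ n
  injOn : Set.InjOn g (support g)
  exists_eq : ∀ i a, g i ≠ 0 → g i ≤ a → a ≤ n → ∃ j, g j = a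

theorem exists_eq_succ_of_mem_extremePoints {g : Fin m → ℕ} (hle : ∀ i, g i ≤ n)
    (hinj : Set.InjOn g (support g))
    (hv : (fun i => (g i : ℝ)) ∈ (partialPermutohedron m n).extremePoints ℝ) {i : Fin m}
    (hi : g i ≠ 0) (hin : g i < n) : ∃ j, g j = g i + 1 := by
  by_contra! hfree
  have hle' : ∀ b ≤ n, ∀ t, update g i b t ≤ n := fun b hb t => by
    rcases eq_or_ne t i with rfl | ht <;> simp [*]
  have h₁ := natCast_mem_ppVertices (hle' _ hin)
    (injOn_support_update hinj fun j _ h => (hfree j h).elim)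
  have h₀ := natCast_mem_ppVertices (hle' 0 n.zero_le)
    (injOn_support_update hinj fun _ _ _ => rfl)
  have hpos : (0 : ℝ) < g i := by exact_mod_cast Nat.pos_of_ne_zero hi
  have hseg : (fun t => (g t : ℝ)) ∈ openSegment ℝ (fun t => (update g i (g i + 1) t : ℝ))
      (fun t => (update g i 0 t : ℝ)) := by
    refine ⟨g i / (g i + 1), 1 / (g i + 1), by positivity, by positivity, by field_simp,
      funext fun t => ?_⟩
    rcases eq_or_ne t i with rfl | ht
    · simp only [Pi.add_apply, Pi.smul_apply, update_self, smul_eq_mul]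
      push_cast
      field_simp
      ring
    · simp only [Pi.add_apply, Pi.smul_apply, update_of_ne ht, smul_eq_mul]
      field_simp
  have := congrFun (hv.2 (subset_convexHull ℝ _ h₁) (subset_convexHull ℝ _ h₀) hseg) i
  simp at this

theorem isTopArrangement_of_mem_extremePoints {g : Fin m → ℕ} (hle : ∀ i, g i ≤ n)
    (hinj : Set.InjOn g (support g))
    (hv : (fun i => (g i : ℝ)) ∈ (partialPermutohedron m n).extremePoints ℝ) :
    IsTopArrangement n g where
  le := hle
  injOn := hinj
  exists_eq i a hi hia han := by
    induction a, hia using Nat.le_induction with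
    | base => exact ⟨i, rfl⟩
    | succ a hia ih =>
      obtain ⟨j, hj⟩ := ih (by omega)
      subst hj
      exact exists_eq_succ_of_mem_extremePoints hle hinj hv (by omega) (by omega)

-- When `g j = 1` all of `1, …, n` occur, and the tight inequality bounds the total sum.
def tightSet (g : Fin m → ℕ) (j : Fin m) : Finset (Fin m) := {t | g j = 1 ∨ g j ≤ g t}

@[simp]
theorem mem_tightSet {g : Fin m → ℕ} {j t : Fin m} :
    t ∈ tightSet g j ↔ g j = 1 ∨ g j ≤ g t := by
  simp [tightSet]

def tightFunctional (g : Fin m → ℕ) (j : Fin m) : Dual ℝ (Fin m → ℝ) :=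
  if g j = 0 then -LinearMap.proj j else ∑ t ∈ tightSet g j, LinearMap.proj t

theorem tightFunctional_natCast (g h : Fin m → ℕ) (j : Fin m) :
    tightFunctional g j (fun t => (h t : ℝ)) =
      if g j = 0 then -(h j : ℝ) else ((∑ t ∈ tightSet g j, h t : ℕ) : ℝ) := by
  unfold tightFunctional
  split_ifs <;> simp

theorem tightFunctional_update_of_ne {g : Fin m → ℕ} {i j : Fin m} (hji : j ≠ i)
    (hi : g j ≠ 0 → i ∉ tightSet g j) (b : ℕ) :
    tightFunctional g j (fun t => (update g i b t : ℝ)) =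
      tightFunctional g j (fun t => (g t : ℝ)) := by
  simp only [tightFunctional_natCast, update_of_ne hji]
  split_ifs with hj
  · rfl
  · rw [sum_congr rfl fun t ht => update_of_ne (ne_of_mem_of_not_mem ht (hi hj)) _ _]

theorem tightFunctional_update_lt {g : Fin m → ℕ} {i : Fin m} {b : ℕ} (h0 : g i = 0 → b ≠ 0)
    (hlt : g i ≠ 0 → b < g i) :
    tightFunctional g i (fun t => (update g i b t : ℝ)) <
      tightFunctional g i (fun t => (g t : ℝ)) := by
  simp only [tightFunctional_natCast, update_self]
  split_ifs with hi
  · simpa [hi, Nat.pos_iff_ne_zero] using h0 hi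
  · rw [Nat.cast_lt]
    refine sum_lt_sum (fun t _ => ?_) ⟨i, by simp, by simpa using hlt hi⟩
    rcases eq_or_ne t i with rfl | ht
    · simpa using (hlt hi).le
    · simp [update_of_ne ht]

theorem tightFunctional_comp_swap_of_ne {g : Fin m → ℕ} {i j q : Fin m} (hji : j ≠ i)
    (hq : g q ≠ 0) (hiq : g j ≠ 0 → (i ∈ tightSet g j ↔ q ∈ tightSet g j)) :
    tightFunctional g j (fun t => (g (Equiv.swap i q t) : ℝ)) =
      tightFunctional g j (fun t => (g t : ℝ)) := by
  simp only [tightFunctional_natCast]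
  split_ifs with hj
  · rw [Equiv.swap_apply_of_ne_of_ne hji (by rintro rfl; exact hq hj)]
  · refine congrArg _ (sum_equiv (Equiv.swap i q) (fun t => ?_) fun _ _ => rfl)
    rcases eq_or_ne t i with rfl | hti
    · simpa using hiq hj
    rcases eq_or_ne t q with rfl | htq
    · simpa using (hiq hj).symm
    · rw [Equiv.swap_apply_of_ne_of_ne hti htq]

theorem tightFunctional_comp_swap_lt {g : Fin m → ℕ} {i q : Fin m} (hq : g q ≠ 0)
    (hqi : g i ≠ 0 → q ∉ tightSet g i ∧ g q < g i) :
    tightFunctional g i (fun t => (g (Equiv.swap i q t) : ℝ)) <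
      tightFunctional g i (fun t => (g t : ℝ)) := by
  simp only [tightFunctional_natCast, Equiv.swap_apply_left]
  split_ifs with hi
  · simpa [hi, Nat.pos_iff_ne_zero] using hq
  · obtain ⟨hqT, hlt⟩ := hqi hi
    rw [Nat.cast_lt]
    refine sum_lt_sum (fun t ht => ?_) ⟨i, by simp, by simpa using hlt⟩
    rcases eq_or_ne t i with rfl | hti
    · simpa using hlt.le
    · rw [Equiv.swap_apply_of_ne_of_ne hti (ne_of_mem_of_not_mem ht hqT)]

namespace IsTopArrangement

variable {g : Fin m → ℕ}

theorem apply_ne_apply (hg : IsTopArrangement n g) {i j : Fin m} (hj : g j ≠ 0) (hji : j ≠ i) :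
    g j ≠ g i :=
  fun h => hji (hg.injOn hj (mem_support.2 (h ▸ hj)) h)

theorem sum_tightSet (hg : IsTopArrangement n g) {j : Fin m} (hj : g j ≠ 0) :
    ∑ t ∈ tightSet g j, g t = ∑ i ∈ range (n + 1 - g j), (n - i) := by
  classical
  have himage : ((tightSet g j).filter (g · ≠ 0)).image g = Icc (g j) n := by
    ext a
    simp only [mem_image, mem_filter, mem_tightSet, mem_Icc]
    constructor
    · rintro ⟨t, ⟨ht, ht0⟩, rfl⟩
      exact ⟨by omega, hg.le t⟩
    · rintro ⟨hja, han⟩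
      obtain ⟨t, rfl⟩ := hg.exists_eq j a hj hja han
      exact ⟨t, ⟨Or.inr hja, by omega⟩, rfl⟩
  have hinj : Set.InjOn g ((tightSet g j).filter (g · ≠ 0)) := fun x hx y hy =>
    hg.injOn (mem_filter.1 hx).2 (mem_filter.1 hy).2
  rw [← sum_filter_ne_zero, ← sum_image (f := fun a => a) hinj, himage, range_eq_Ico,
    sum_Ico_reflect (fun a => a) 0 (by omega), Nat.sub_sub_self (by have := hg.le j; omega),
    Nat.sub_zero, Finset.Ico_add_one_right_eq_Icc]

theorem card_tightSet_le (hg : IsTopArrangement n g) {j : Fin m} (hj : g j ≠ 0)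
    (hj1 : g j ≠ 1) : #(tightSet g j) ≤ n + 1 - g j := by
  have hmaps : ∀ t ∈ tightSet g j, g t ∈ Icc (g j) n := fun t ht => by
    simpa [hj1, hg.le t] using ht
  have hsupp : ∀ t ∈ tightSet g j, g t ≠ 0 := fun t ht => by
    have := (mem_Icc.1 (hmaps t ht)).1
    omega
  simpa using card_le_card_of_injOn g hmaps
    fun s hs t ht => hg.injOn (hsupp s hs) (hsupp t ht)

theorem tightFunctional_le (hg : IsTopArrangement n g) (j : Fin m) {x : Fin m → ℝ}
    (hx : x ∈ partialPermutohedron m n) :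
    tightFunctional g j x ≤ tightFunctional g j (fun t => (g t : ℝ)) := by
  refine convexHull_min (fun e he => ?_)
    (convex_halfSpace_le (tightFunctional g j).isLinear _) hx
  obtain ⟨e, hle, hinj, rfl⟩ := exists_natCast_eq_of_mem_ppVertices he
  simp only [Set.mem_ofPred_eq, tightFunctional_natCast]
  split_ifs with hj
  · simp [hj]
  · rw [hg.sum_tightSet hj, Nat.cast_le]
    refine sum_le_sum_range_sub_of_injOn hle hinj _ ?_
    by_cases hj1 : g j = 1
    · exact Or.inr (by omega)
    · exact Or.inl (hg.card_tightSet_le hj hj1)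

theorem exists_tightNeighbor (hn : 0 < n) (hg : IsTopArrangement n g) (i : Fin m) :
    ∃ h : Fin m → ℕ, (∀ t, h t ≤ n) ∧ Set.InjOn h (support h) ∧
      (∀ j ≠ i, tightFunctional g j (fun t => (h t : ℝ)) =
        tightFunctional g j (fun t => (g t : ℝ))) ∧
      tightFunctional g i (fun t => (h t : ℝ)) < tightFunctional g i (fun t => (g t : ℝ)) := by
  obtain ⟨b, hb⟩ : ∃ b, (g i = 0 ∧ b = 1) ∨ (g i ≠ 0 ∧ b = g i - 1) := by
    by_cases h : g i = 0 <;> simp [h]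
  have hbn : b ≤ n := by
    have := hg.le i
    omega
  by_cases hheld : ∃ q, g q ≠ 0 ∧ g q = b
  · obtain ⟨q, hq, hqb⟩ := hheld
    refine ⟨g ∘ Equiv.swap i q, fun t => hg.le _, injOn_support_comp_perm hg.injOn _,
      fun j hji => tightFunctional_comp_swap_of_ne hji hq fun hj => ?_,
      tightFunctional_comp_swap_lt hq fun hi => ?_⟩
    · have := hg.apply_ne_apply hj hji
      simp only [mem_tightSet]
      omega
    · simp only [mem_tightSet]
      omega
  · push Not at hheld
    refine ⟨update g i b, fun t => ?_, injOn_support_update hg.injOn fun j _ hj => ?_,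
      fun j hji => tightFunctional_update_of_ne hji (fun hj hij => ?_) b,
      tightFunctional_update_lt (by omega) (by omega)⟩
    · rcases eq_or_ne t i with rfl | ht
      · simpa using hbn
      · simpa [update_of_ne ht] using hg.le t
    · by_contra hb0
      exact hheld j (hj ▸ hb0) hj
    · have := hg.apply_ne_apply hj hji
      rw [mem_tightSet] at hij
      obtain ⟨q, hq⟩ := hg.exists_eq j b hj (by omega) hbn
      exact hheld q (by omega) hq

theorem nonempty_simpleVertexCertificate (hn : 0 < n) (hg : IsTopArrangement n g) :
    Nonempty (SimpleVertexCertificate (partialPermutohedron m n) (fun i => (g i : ℝ)) (Fin m)) := by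
  choose h hle hinj heq hlt using hg.exists_tightNeighbor hn
  exact ⟨{ L := tightFunctional g
           w := fun i t => (h i t : ℝ)
           le_of_mem := fun j _ hx => hg.tightFunctional_le j hx
           w_mem := fun i => subset_convexHull ℝ _ (natCast_mem_ppVertices (hle i) (hinj i))
           apply_w_of_ne := fun j i hji => heq i j hji
           apply_w_lt := hlt }⟩

end IsTopArrangement

/-- `P(m,n)` is a simple polytope: every extreme point lies in
exactly `m` faces of dimension `m - 1`. -/
theorem partialPermutohedron_simple (m n : ℕ) (hm : 0 < m) (hn : 0 < n) :
    ∀ v ∈ Set.extremePoints ℝ (partialPermutohedron m n),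
      {F : Set (Fin m → ℝ) | Convex ℝ F ∧
          IsExtreme ℝ (partialPermutohedron m n) F ∧
          Module.finrank ℝ (affineSpan ℝ F).direction = m - 1 ∧
          v ∈ F}.ncard = m := by
  intro v hv
  obtain ⟨g, hle, hinj, rfl⟩ :=
    exists_natCast_eq_of_mem_ppVertices (extremePoints_convexHull_subset hv)
  obtain ⟨C⟩ :=
    (isTopArrangement_of_mem_extremePoints hle hinj hv).nonempty_simpleVertexCertificate hn
  have : Nonempty (Fin m) := ⟨⟨0, hm⟩⟩
  simpa using C.ncard_facets_containing_vertex (by simp) (convex_convexHull ℝ _) hv.1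
end

section
/- For every positive integer m and all integers n₁, n₂ ≥ m, the partial permutohedra P(m,n₁) and P(m,n₂) are combinatorially equivalent: there exists a bijection between the set of nonempty faces of P(m,n₁) and the set of nonempty faces of P(m,n₂) such that both the bijection and its inverse preserve inclusion of faces. -/
open Set Function

section ExtremeSubsets

variable {𝕜 E : Type*} [Field 𝕜] [LinearOrder 𝕜] [IsStrictOrderedRing 𝕜] [AddCommGroup E]
  [Module 𝕜 E] {B F G : Set E}

theorem IsExtreme.disjoint_convexHull_sdiff (hF : IsExtreme 𝕜 (convexHull 𝕜 B) F) :
    Disjoint (convexHull 𝕜 (B \ F)) F := by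
  have hsub : convexHull 𝕜 (B \ F) ⊆ convexHull 𝕜 B \ F :=
    convexHull_min (sdiff_subset_sdiff_left (subset_convexHull 𝕜 B))
      (IsExtreme.convex_sdiff (convex_convexHull 𝕜 B) hF)
  exact disjoint_left.2 fun x hx hxF => (hsub hx).2 hxF

theorem IsExtreme.subset_convexHull_inter (hF : IsExtreme 𝕜 (convexHull 𝕜 B) F) :
    F ⊆ convexHull 𝕜 (B ∩ F) := by
  intro x hxF
  have hxB := hF.1 hxF
  rcases (B ∩ F).eq_empty_or_nonempty with hS | hS
  · rw [← inter_union_sdiff B F, hS, empty_union] at hxB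
    exact absurd hxF (disjoint_left.1 hF.disjoint_convexHull_sdiff hxB)
  rcases (B \ F).eq_empty_or_nonempty with hD | hD
  · rwa [inter_eq_left.2 (sdiff_eq_empty.1 hD)]
  rw [← inter_union_sdiff B F, convexHull_union hS hD] at hxB
  obtain ⟨y, hy, z, hz, hxyz⟩ := mem_convexJoin.1 hxB
  have hzF : z ∉ F := disjoint_left.1 hF.disjoint_convexHull_sdiff hz
  obtain rfl | hxy := eq_or_ne x y
  · exact hy
  obtain rfl | hxz := eq_or_ne x z
  · exact absurd hxF hzF
  have hyB : y ∈ convexHull 𝕜 B := convexHull_mono inter_subset_left hy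
  have hzB : z ∈ convexHull 𝕜 B := convexHull_mono sdiff_subset hz
  exact absurd (hF.right_mem_of_mem_openSegment hyB hzB hxF
    (mem_openSegment_of_ne_left_right hxy.symm hxz.symm hxyz)) hzF

theorem IsExtreme.subset_iff_inter_subset (hF : IsExtreme 𝕜 (convexHull 𝕜 B) F)
    (hG : Convex 𝕜 G) : F ⊆ G ↔ B ∩ F ⊆ G :=
  ⟨fun h => inter_subset_right.trans h,
    fun h => hF.subset_convexHull_inter.trans (convexHull_min h hG)⟩

/-- Split the weights of an affine combination of points of `F` into positive and negative parts. -/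
theorem Convex.exists_smul_add_smul_mem_of_mem_affineSpan (hF : Convex 𝕜 F) {y : E}
    (hy : y ∈ affineSpan 𝕜 F) :
    ∃ a : 𝕜, 0 ≤ a ∧ ∃ q ∈ F, (1 + a)⁻¹ • y + (a * (1 + a)⁻¹) • q ∈ F := by
  obtain ⟨q₀, hq₀⟩ := (affineSpan_nonempty 𝕜).1 ⟨y, hy⟩
  rw [← Subtype.range_coe (s := F), mem_affineSpan_iff_eq_affineCombination] at hy
  obtain ⟨s, w, hw1, rfl⟩ := hy
  rw [Finset.affineCombination_eq_linear_combination s _ w hw1]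
  set a := ∑ i ∈ s, (w i)⁻
  have ha : 0 ≤ a := Finset.sum_nonneg fun i _ => negPart_nonneg _
  have hsum : ∑ i ∈ s, (w i)⁺ = 1 + a := by
    rw [← hw1, ← Finset.sum_add_distrib]
    exact Finset.sum_congr rfl fun i _ => by linear_combination posPart_sub_negPart (w i)
  have hsplit : ∑ i ∈ s, (w i)⁺ • (i : E) = ∑ i ∈ s, w i • (i : E) + ∑ i ∈ s, (w i)⁻ • (i : E) := by
    rw [← Finset.sum_add_distrib]
    exact Finset.sum_congr rfl fun i _ => by
      rw [← add_smul]; congr 1; linear_combination posPart_sub_negPart (w i)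
  have hr : s.centerMass (fun i => (w i)⁺) (↑) ∈ F :=
    hF.centerMass_mem (fun i _ => posPart_nonneg _) (by rw [hsum]; positivity) fun i _ => i.2
  rcases ha.eq_or_lt with ha0 | ha0
  · refine ⟨0, le_rfl, q₀, hq₀, ?_⟩
    have hzero : ∑ i ∈ s, (w i)⁻ • (i : E) = 0 := Finset.sum_eq_zero fun i hi => by
      rw [(Finset.sum_eq_zero_iff_of_nonneg fun i _ => negPart_nonneg _).1 ha0.symm i hi,
        zero_smul]
    rw [Finset.centerMass, hsum, hsplit, hzero, ← ha0] at hr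
    simpa using hr
  refine ⟨a, ha, s.centerMass (fun i => (w i)⁻) (↑),
    hF.centerMass_mem (fun i _ => negPart_nonneg _) ha0 fun i _ => i.2, ?_⟩
  convert hr using 1
  rw [Finset.centerMass, Finset.centerMass, hsum, hsplit, smul_smul, smul_add]
  congr 2
  change a * (1 + a)⁻¹ * a⁻¹ = (1 + a)⁻¹
  field_simp

theorem IsExtreme.inter_affineSpan_subset {A : Set E} (hF : IsExtreme 𝕜 A F) (hFc : Convex 𝕜 F) :
    A ∩ affineSpan 𝕜 F ⊆ F := by
  rintro y ⟨hyA, hy⟩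
  obtain ⟨a, ha, q, hq, hmem⟩ := hFc.exists_smul_add_smul_mem_of_mem_affineSpan hy
  rcases ha.eq_or_lt with rfl | ha
  · simpa using hmem
  exact hF.2 hyA (hF.1 hq) hmem ⟨(1 + a)⁻¹, a * (1 + a)⁻¹, by positivity, by positivity,
    by field_simp, rfl⟩

end ExtremeSubsets

theorem AffineSubspace.apply_eq_of_forall_lt_apply {𝕜 E : Type*} [Field 𝕜] [LinearOrder 𝕜]
    [IsStrictOrderedRing 𝕜] [AddCommGroup E] [Module 𝕜 E] {Q : AffineSubspace 𝕜 E}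
    (f : E →ₗ[𝕜] 𝕜) {v : 𝕜} (h : ∀ x ∈ Q, v < f x) {a b : E} (ha : a ∈ Q) (hb : b ∈ Q) :
    f a = f b := by
  by_contra hne
  have hd : f b - f a ≠ 0 := sub_ne_zero.2 (Ne.symm hne)
  have := h _ (AffineMap.lineMap_mem ((v - f a) / (f b - f a)) ha hb)
  rw [AffineMap.lineMap_apply_module', map_add, map_smul, map_sub, smul_eq_mul,
    div_mul_cancel₀ _ hd] at this
  simp at this

section Polytope

variable {E : Type*} [NormedAddCommGroup E] [NormedSpace ℝ E] {B F : Set E}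

theorem IsExtreme.isExposed_convexHull (hB : B.Finite) (hF : IsExtreme ℝ (convexHull ℝ B) F)
    (hFc : Convex ℝ F) : IsExposed ℝ (convexHull ℝ B) F := by
  rintro ⟨z, hz⟩
  have hFeq : F = convexHull ℝ (B ∩ F) :=
    hF.subset_convexHull_inter.antisymm (convexHull_min inter_subset_right hFc)
  have : FiniteDimensional ℝ (affineSpan ℝ F).direction := by
    rw [hFeq, affineSpan_convexHull]
    exact finiteDimensional_direction_affineSpan_of_finite ℝ (hB.subset inter_subset_left)
  have hdisj : Disjoint (convexHull ℝ (B \ F)) (affineSpan ℝ F : Set E) :=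
    disjoint_left.2 fun y hyD hyF => disjoint_left.1 hF.disjoint_convexHull_sdiff hyD
      (hF.inter_affineSpan_subset hFc ⟨convexHull_mono sdiff_subset hyD, hyF⟩)
  obtain ⟨f, u, v, hfu, huv, hfv⟩ := geometric_hahn_banach_compact_closed
    (convex_convexHull ℝ _) ((hB.subset sdiff_subset).isCompact_convexHull ℝ)
    (AffineSubspace.convex _) (AffineSubspace.closed_of_finiteDimensional _) hdisj
  have hfF : ∀ x ∈ F, f x = f z := fun x hx =>
    AffineSubspace.apply_eq_of_forall_lt_apply f.toLinearMap hfv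
      (subset_affineSpan ℝ F hx) (subset_affineSpan ℝ F hz)
  have hfD : ∀ b ∈ B \ F, f b < f z := fun b hb =>
    (hfu b (subset_convexHull ℝ _ hb)).trans (huv.trans (hfv z (subset_affineSpan ℝ F hz)))
  have hle : convexHull ℝ B ⊆ {y | f y ≤ f z} := by
    refine convexHull_min (fun b hb => ?_) (convex_halfSpace_le f.toLinearMap.isLinear _)
    by_cases hbF : b ∈ F
    · exact (hfF b hbF).le
    · exact (hfD b ⟨hb, hbF⟩).le
  refine ⟨f, subset_antisymm (fun x hx => ⟨hF.1 hx, fun y hy => (hfF x hx).symm ▸ hle hy⟩) ?_⟩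
  have hG : IsExtreme ℝ (convexHull ℝ B) (f.toExposed (convexHull ℝ B)) :=
    ContinuousLinearMap.toExposed.isExposed.isExtreme
  refine hG.subset_convexHull_inter.trans (convexHull_min (fun b ⟨hbB, hbG⟩ => ?_) hFc)
  by_contra hbF
  exact (hfD b ⟨hbB, hbF⟩).not_ge (hbG.2 z (hF.1 hz))

theorem ContinuousLinearMap.inter_toExposed_convexHull (l : StrongDual ℝ E) :
    B ∩ l.toExposed (convexHull ℝ B) = l.toExposed B := by
  ext x
  refine ⟨fun ⟨hxB, _, hx⟩ => ⟨hxB, fun y hy => hx y (subset_convexHull ℝ B hy)⟩,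
    fun ⟨hxB, hx⟩ => ⟨hxB, subset_convexHull ℝ B hxB, fun y hy => ?_⟩⟩
  exact convexHull_min hx (convex_halfSpace_le l.toLinearMap.isLinear _) hy

theorem ContinuousLinearMap.toExposed_convexHull_subset_iff (l l' : StrongDual ℝ E) :
    l.toExposed (convexHull ℝ B) ⊆ l'.toExposed (convexHull ℝ B) ↔
      l.toExposed B ⊆ l'.toExposed B := by
  rw [ContinuousLinearMap.toExposed.isExposed.isExtreme.subset_iff_inter_subset
      (ContinuousLinearMap.toExposed.isExposed.convex (convex_convexHull ℝ B)),
    ← l.inter_toExposed_convexHull (B := B), ← l'.inter_toExposed_convexHull (B := B),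
    subset_inter_iff]
  exact (and_iff_right inter_subset_left).symm

theorem isExtreme_convexHull_iff_exists_toExposed (hB : B.Finite) (hBne : B.Nonempty) :
    F.Nonempty ∧ Convex ℝ F ∧ IsExtreme ℝ (convexHull ℝ B) F ↔
      ∃ l : StrongDual ℝ E, l.toExposed (convexHull ℝ B) = F := by
  constructor
  · rintro ⟨hne, hFc, hF⟩
    obtain ⟨l, rfl⟩ := hF.isExposed_convexHull hB hFc hne
    exact ⟨l, rfl⟩
  · rintro ⟨l, rfl⟩
    obtain ⟨x, hx, hmax⟩ := (hB.isCompact_convexHull ℝ).exists_isMaxOn hBne.convexHull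
      l.continuous.continuousOn
    exact ⟨⟨x, hx, hmax⟩, ContinuousLinearMap.toExposed.isExposed.convex (convex_convexHull ℝ B),
      ContinuousLinearMap.toExposed.isExposed.isExtreme⟩

end Polytope

noncomputable def OrderIso.rangeOfLeIff {ι α β : Type*} [PartialOrder α] [PartialOrder β]
    (f : ι → α) (g : ι → β) (h : ∀ i j, f i ≤ f j ↔ g i ≤ g j) : range f ≃o range g :=
  have hf_eq : ∀ i j, f i = f j ↔ g i = g j := fun i j => by
    simp only [le_antisymm_iff, h]
  { toFun := fun x => rangeFactorization g (rangeSplitting f x)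
    invFun := fun y => rangeFactorization f (rangeSplitting g y)
    left_inv := fun x => Subtype.ext <|
      ((hf_eq _ _).2 (apply_rangeSplitting g _)).trans (apply_rangeSplitting f x)
    right_inv := fun y => Subtype.ext <|
      ((hf_eq _ _).1 (apply_rangeSplitting f _)).trans (apply_rangeSplitting g y)
    map_rel_iff' := fun {x y} => by
      simp only [Equiv.coe_fn_mk, rangeFactorization, Subtype.mk_le_mk, ← h,
        apply_rangeSplitting, Subtype.coe_le_coe] }

section Coordinates

variable {ι : Type*} [DecidableEq ι] (l : StrongDual ℝ (ι → ℝ))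

theorem ContinuousLinearMap.apply_eq_sum_mul_single [Fintype ι] (x : ι → ℝ) :
    l x = ∑ i, x i * l (Pi.single i 1) := by
  conv_lhs => rw [← Finset.univ_sum_single x]
  simp only [map_sum]
  refine Finset.sum_congr rfl fun i _ => ?_
  rw [← smul_eq_mul, ← map_smul, ← Pi.single_smul, smul_eq_mul, mul_one]

theorem ContinuousLinearMap.apply_update (x : ι → ℝ) (i : ι) (r : ℝ) :
    l (update x i r) = l x + (r - x i) * l (Pi.single i 1) := by
  have : update x i r = x + Pi.single i (r - x i) := by
    ext j; rcases eq_or_ne j i with rfl | h <;> simp [*]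
  rw [this, map_add, ← smul_eq_mul, ← map_smul, ← Pi.single_smul, smul_eq_mul, mul_one]

end Coordinates

section Vertices

variable {m n : ℕ} {x : Fin m → ℝ}

theorem ppVertices_finite (m n : ℕ) : (ppVertices m n).Finite := by
  refine (Set.Finite.pi fun _ : Fin m => (Set.finite_Iic n).image ((↑) : ℕ → ℝ)).subset ?_
  intro x hx i _
  obtain ⟨k, hk, hxk⟩ := hx.1 i
  exact ⟨k, hk, hxk.symm⟩

theorem zero_mem_ppVertices (m n : ℕ) : (0 : Fin m → ℝ) ∈ ppVertices m n :=
  ⟨fun _ => ⟨0, n.zero_le, by simp⟩, fun _ _ _ h => absurd rfl h⟩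

theorem ppVertices_nonneg (hx : x ∈ ppVertices m n) (i : Fin m) : 0 ≤ x i := by
  obtain ⟨k, -, hk⟩ := hx.1 i
  exact hk ▸ k.cast_nonneg

theorem update_mem_ppVertices (hx : x ∈ ppVertices m n) (i : Fin m) {k : ℕ} (hk : k ≤ n)
    (hfree : ∀ j ≠ i, (k : ℝ) ≠ 0 → x j ≠ k) : update x i (k : ℝ) ∈ ppVertices m n := by
  refine ⟨fun j => ?_, fun a b hab ha hb => ?_⟩
  · rcases eq_or_ne j i with rfl | hj
    · exact ⟨k, hk, by simp⟩
    · rw [update_of_ne hj]; exact hx.1 j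
  rcases eq_or_ne a i with rfl | hai
  · rw [update_self] at ha ⊢
    rw [update_of_ne hab.symm] at hb ⊢
    exact (hfree b hab.symm ha).symm
  rcases eq_or_ne b i with rfl | hbi
  · rw [update_self] at hb ⊢
    rw [update_of_ne hai] at ha ⊢
    exact hfree a hab hb
  rw [update_of_ne hai, update_of_ne hbi] at *
  exact hx.2 a b hab ha hb

theorem exists_unused_value {N : ℕ}
    (h : (Finset.univ.filter fun j => x j ≠ 0).card < N) :
    ∃ v : ℕ, 1 ≤ v ∧ v ≤ N ∧ ∀ j, x j ≠ v := by
  classical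
  have hcard : ((Finset.univ.filter fun j => x j ≠ 0).image x).card <
      ((Finset.Icc 1 N).image ((↑) : ℕ → ℝ)).card := by
    rw [Finset.card_image_of_injective _ Nat.cast_injective, Nat.card_Icc]
    exact Finset.card_image_le.trans_lt (by omega)
  obtain ⟨_, hvN, hvx⟩ := Finset.exists_mem_notMem_of_card_lt_card hcard
  obtain ⟨v, hv, rfl⟩ := Finset.mem_image.1 hvN
  obtain ⟨hv1, hvN⟩ := Finset.mem_Icc.1 hv
  refine ⟨v, hv1, hvN, fun j hj => hvx (Finset.mem_image.2 ⟨j, ?_, hj⟩)⟩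
  simp only [Finset.mem_filter, Finset.mem_univ, true_and, hj]
  exact_mod_cast (by omega : v ≠ 0)

theorem comp_mem_ppVertices {n' : ℕ} (hx : x ∈ ppVertices m n) {φ : ℝ → ℝ} (hφ0 : φ 0 = 0)
    (hφ : ∀ k : ℕ, k ≤ n → ∃ k' : ℕ, k' ≤ n' ∧ φ k = k')
    (hinj : ∀ a b, φ a ≠ 0 → φ a = φ b → a = b) : φ ∘ x ∈ ppVertices m n' := by
  refine ⟨fun i => ?_, fun i j hij hi hj hφij => ?_⟩
  · obtain ⟨k, hk, hxk⟩ := hx.1 i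
    simpa [hxk] using hφ k hk
  have hxij := hinj _ _ hi hφij
  refine hx.2 i j hij (fun h => hi ?_) (fun h => hj ?_) hxij <;> simp [h, hφ0]

end Vertices

section Shift

variable {m n : ℕ} {x : Fin m → ℝ}

noncomputable def supportIndicator (x : Fin m → ℝ) : Fin m → ℝ :=
  fun i => if x i = 0 then 0 else 1

noncomputable def shiftUp (x : Fin m → ℝ) : Fin m → ℝ := x + supportIndicator x

noncomputable def shiftDown (x : Fin m → ℝ) : Fin m → ℝ := x - supportIndicator x

theorem shiftUp_eq (x : Fin m → ℝ) : shiftUp x = fun i => if x i = 0 then 0 else x i + 1 := by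
  ext i; by_cases h : x i = 0 <;> simp [shiftUp, supportIndicator, h]

theorem shiftDown_eq (x : Fin m → ℝ) : shiftDown x = fun i => if x i = 0 then 0 else x i - 1 := by
  ext i; by_cases h : x i = 0 <;> simp [shiftDown, supportIndicator, h]

theorem shiftUp_mem_ppVertices (hx : x ∈ ppVertices m n) : shiftUp x ∈ ppVertices m (n + 1) := by
  rw [shiftUp_eq]
  refine comp_mem_ppVertices hx (φ := fun a => if a = 0 then 0 else a + 1) (by simp)
    (fun k hk => ?_) (fun a b ha hab => ?_)
  · rcases k.eq_zero_or_pos with rfl | hk0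
    · exact ⟨0, by omega, by simp⟩
    · exact ⟨k + 1, by omega, by simp [hk0.ne']⟩
  · split_ifs at ha hab <;> simp_all

theorem shiftDown_mem_ppVertices (hx : x ∈ ppVertices m (n + 1)) : shiftDown x ∈ ppVertices m n := by
  rw [shiftDown_eq]
  refine comp_mem_ppVertices hx (φ := fun a => if a = 0 then 0 else a - 1) (by simp)
    (fun k hk => ?_) (fun a b ha hab => ?_)
  · rcases k.eq_zero_or_pos with rfl | hk0
    · exact ⟨0, by omega, by simp⟩
    · exact ⟨k - 1, by omega, by simp [hk0.ne', Nat.cast_sub hk0]⟩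
  · split_ifs at ha hab <;> simp_all

theorem shiftUp_shiftDown (hx : ∀ i, x i ≠ 1) : shiftUp (shiftDown x) = x := by
  ext i
  have : x i - 1 ≠ 0 := sub_ne_zero.2 (hx i)
  by_cases h : x i = 0 <;> simp [shiftUp_eq, shiftDown_eq, h, this]

end Shift

section Weights

variable {m : ℕ} (l : StrongDual ℝ (Fin m → ℝ)) {x : Fin m → ℝ}

/-- The largest value of `l` on a `0/1`-vector. -/
noncomputable def posWeight : ℝ := ∑ i, (l (Pi.single i 1))⁺

theorem apply_supportIndicator_le : l (supportIndicator x) ≤ posWeight l := by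
  rw [l.apply_eq_sum_mul_single]
  refine Finset.sum_le_sum fun i _ => ?_
  by_cases h : x i = 0 <;> simp [supportIndicator, h, le_posPart]

theorem apply_supportIndicator_eq (hneg : ∀ i, l (Pi.single i 1) < 0 → x i = 0)
    (hpos : ∀ i, 0 < l (Pi.single i 1) → x i ≠ 0) :
    l (supportIndicator x) = posWeight l := by
  rw [l.apply_eq_sum_mul_single]
  refine Finset.sum_congr rfl fun i _ => ?_
  rcases lt_trichotomy (l (Pi.single i 1)) 0 with hc | hc | hc
  · simp [supportIndicator, hneg i hc, posPart_eq_zero.2 hc.le]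
  · simp [hc]
  · simp [supportIndicator, hpos i hc, posPart_eq_self.2 hc.le]

theorem apply_shiftUp : l (shiftUp x) = l x + l (supportIndicator x) := map_add l _ _

theorem apply_shiftDown : l (shiftDown x) = l x - l (supportIndicator x) := map_sub l _ _

end Weights

section Maximizers

variable {m n : ℕ} {l : StrongDual ℝ (Fin m → ℝ)} {x a : Fin m → ℝ} {i : Fin m}

theorem mul_apply_single_nonpos {S : Set (Fin m → ℝ)} (hx : x ∈ l.toExposed S) {r : ℝ}
    (hr : update x i r ∈ S) : (r - x i) * l (Pi.single i 1) ≤ 0 := by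
  have := hx.2 _ hr
  rw [l.apply_update] at this
  linarith

theorem eq_zero_of_mem_toExposed (hx : x ∈ l.toExposed (ppVertices m n))
    (hc : l (Pi.single i 1) < 0) : x i = 0 := by
  have hr := update_mem_ppVertices hx.1 i n.zero_le (by simp)
  rw [Nat.cast_zero] at hr
  have := mul_apply_single_nonpos hx hr
  nlinarith [ppVertices_nonneg hx.1 i]

theorem le_of_mem_toExposed {N : ℕ} (hx : x ∈ l.toExposed (ppVertices m N))
    (hc : 0 < l (Pi.single i 1)) {v : ℕ} (hv : v ≤ N) (hfree : ∀ j, x j ≠ v) : (v : ℝ) ≤ x i := by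
  have := mul_apply_single_nonpos hx (update_mem_ppVertices hx.1 i hv fun j _ _ => hfree j)
  nlinarith

theorem ne_zero_of_mem_toExposed (hmn : m ≤ n) (hx : x ∈ l.toExposed (ppVertices m n))
    (hc : 0 < l (Pi.single i 1)) : x i ≠ 0 := by
  intro hxi
  have hsub : (Finset.univ.filter fun j => x j ≠ 0) ⊆ Finset.univ.erase i := fun j hj =>
    Finset.mem_erase.2 ⟨fun hji => (Finset.mem_filter.1 hj).2 (hji ▸ hxi), Finset.mem_univ j⟩
  have hcard : (Finset.univ.filter fun j => x j ≠ 0).card < n :=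
    (Finset.card_le_card hsub).trans_lt (by simp; have := i.pos; omega)
  obtain ⟨v, hv1, hvn, hfree⟩ := exists_unused_value hcard
  have := le_of_mem_toExposed hx hc hvn hfree
  rw [hxi] at this
  exact absurd this (by norm_num; omega)

theorem apply_single_eq_zero_of_eq_one (hmn : m ≤ n)
    (hx : x ∈ l.toExposed (ppVertices m (n + 1))) (hxi : x i = 1) : l (Pi.single i 1) = 0 := by
  rcases lt_trichotomy (l (Pi.single i 1)) 0 with hc | hc | hc
  · simp [eq_zero_of_mem_toExposed hx hc] at hxi
  · exact hc
  have hcard : (Finset.univ.filter fun j => x j ≠ 0).card < n + 1 :=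
    (Finset.card_filter_le _ _).trans_lt (by simp; omega)
  obtain ⟨v, hv1, hvn, hfree⟩ := exists_unused_value hcard
  have := le_of_mem_toExposed hx hc hvn hfree
  rw [hxi] at this
  have hv : v = 1 := by exact_mod_cast le_antisymm this (by exact_mod_cast hv1)
  exact absurd (hxi.trans (by simp [hv])) (hfree i)

theorem apply_supportIndicator_of_mem_toExposed (hmn : m ≤ n)
    (hx : x ∈ l.toExposed (ppVertices m n)) : l (supportIndicator x) = posWeight l :=
  apply_supportIndicator_eq l (fun _ => eq_zero_of_mem_toExposed hx)
    (fun _ => ne_zero_of_mem_toExposed hmn hx)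

theorem exists_mem_toExposed (l : StrongDual ℝ (Fin m → ℝ)) (n : ℕ) :
    ∃ a, a ∈ l.toExposed (ppVertices m n) :=
  let ⟨a, ha, hmax⟩ := Set.exists_max_image _ l (ppVertices_finite m n) ⟨0, zero_mem_ppVertices m n⟩
  ⟨a, ha, hmax⟩

theorem apply_eq_add_posWeight (hmn : m ≤ n) {b : Fin m → ℝ}
    (ha : a ∈ l.toExposed (ppVertices m n)) (hb : b ∈ l.toExposed (ppVertices m (n + 1))) :
    l b = l a + posWeight l := by
  have h₁ := ha.2 _ (shiftDown_mem_ppVertices hb.1)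
  have h₂ := hb.2 _ (shiftUp_mem_ppVertices ha.1)
  rw [apply_shiftDown] at h₁
  rw [apply_shiftUp, apply_supportIndicator_of_mem_toExposed hmn ha] at h₂
  linarith [apply_supportIndicator_le l (x := b)]

theorem shiftUp_mem_toExposed (hmn : m ≤ n) (ha : a ∈ l.toExposed (ppVertices m n)) :
    shiftUp a ∈ l.toExposed (ppVertices m (n + 1)) := by
  obtain ⟨b, hb⟩ := exists_mem_toExposed l (n + 1)
  refine ⟨shiftUp_mem_ppVertices ha.1, fun y hy => ?_⟩
  rw [apply_shiftUp, apply_supportIndicator_of_mem_toExposed hmn ha,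
    ← apply_eq_add_posWeight hmn ha hb]
  exact hb.2 y hy

theorem mem_toExposed_of_shiftUp_mem (hmn : m ≤ n) (ha : a ∈ ppVertices m n)
    (h : shiftUp a ∈ l.toExposed (ppVertices m (n + 1))) : a ∈ l.toExposed (ppVertices m n) := by
  obtain ⟨a', ha'⟩ := exists_mem_toExposed l n
  have h₁ := apply_eq_add_posWeight hmn ha' h
  rw [apply_shiftUp] at h₁
  have h₂ := apply_supportIndicator_le l (x := a)
  exact ⟨ha, fun y hy => (ha'.2 y hy).trans (by linarith)⟩

end Maximizers

section Transfer

variable {m n : ℕ} {l l' : StrongDual ℝ (Fin m → ℝ)} {x : Fin m → ℝ} {i : Fin m}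

theorem mem_toExposed_succ_of_forall_ne_one (hmn : m ≤ n)
    (h : l.toExposed (ppVertices m n) ⊆ l'.toExposed (ppVertices m n))
    (hx : x ∈ l.toExposed (ppVertices m (n + 1))) (hx₁ : ∀ i, x i ≠ 1) :
    x ∈ l'.toExposed (ppVertices m (n + 1)) := by
  have hdown := shiftDown_mem_ppVertices hx.1
  rw [← shiftUp_shiftDown hx₁] at hx ⊢
  exact shiftUp_mem_toExposed hmn (h (mem_toExposed_of_shiftUp_mem hmn hdown hx))

theorem update_mem_toExposed_succ (hmn : m ≤ n)
    (h : l.toExposed (ppVertices m n) ⊆ l'.toExposed (ppVertices m n))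
    (hx : x ∈ l.toExposed (ppVertices m (n + 1))) (hxi : x i = 1) {k : ℕ} (hk : k ≤ n + 1)
    (hk₁ : k ≠ 1) (hfree : ∀ j ≠ i, (k : ℝ) ≠ 0 → x j ≠ k) :
    update x i (k : ℝ) ∈ l'.toExposed (ppVertices m (n + 1)) := by
  have hu := update_mem_ppVertices hx.1 i hk hfree
  have hc := apply_single_eq_zero_of_eq_one hmn hx hxi
  refine mem_toExposed_succ_of_forall_ne_one hmn h
    ⟨hu, fun y hy => by rw [l.apply_update, hc, mul_zero, add_zero]; exact hx.2 y hy⟩ fun j => ?_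
  rcases eq_or_ne j i with rfl | hji
  · rw [update_self]; exact_mod_cast hk₁
  · rw [update_of_ne hji]
    intro hxj
    exact hx.1.2 j i hji (by simp [hxj]) (by simp [hxi]) (hxj.trans hxi.symm)

theorem toExposed_succ_subset (hmn : m ≤ n)
    (h : l.toExposed (ppVertices m n) ⊆ l'.toExposed (ppVertices m n)) :
    l.toExposed (ppVertices m (n + 1)) ⊆ l'.toExposed (ppVertices m (n + 1)) := by
  intro x hx
  by_cases hx₁ : ∀ i, x i ≠ 1
  · exact mem_toExposed_succ_of_forall_ne_one hmn h hx hx₁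
  obtain ⟨i, hxi⟩ := not_forall_not.1 hx₁
  have hcard : (Finset.univ.filter fun j => x j ≠ 0).card < n + 1 :=
    (Finset.card_filter_le _ _).trans_lt (by simp; omega)
  obtain ⟨v, hv1, hvn, hfree⟩ := exists_unused_value hcard
  have hv₂ : 2 ≤ v := by
    have : v ≠ 1 := fun hv => hfree i (by simp [hxi, hv])
    omega
  -- `x` is the convex combination `(1/v) • x[i ↦ v] + (1 - 1/v) • x[i ↦ 0]`.
  have hup := update_mem_toExposed_succ hmn h hx hxi hvn (by omega) fun j _ _ => hfree j
  have hzero := update_mem_toExposed_succ hmn h hx hxi (k := 0) (by omega) (by omega)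
    fun j _ h0 => absurd Nat.cast_zero h0
  refine ⟨hx.1, fun y hy => ?_⟩
  have e₁ := hup.2 y hy
  have e₂ := hzero.2 y hy
  rw [l'.apply_update, hxi] at e₁ e₂
  push_cast at e₂
  have hv : (2 : ℝ) ≤ v := by exact_mod_cast hv₂
  nlinarith

theorem toExposed_subset_iff_succ (hmn : m ≤ n) :
    l.toExposed (ppVertices m n) ⊆ l'.toExposed (ppVertices m n) ↔
      l.toExposed (ppVertices m (n + 1)) ⊆ l'.toExposed (ppVertices m (n + 1)) :=
  ⟨toExposed_succ_subset hmn, fun h _ ha =>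
    mem_toExposed_of_shiftUp_mem hmn ha.1 (h (shiftUp_mem_toExposed hmn ha))⟩

theorem toExposed_subset_iff_of_le {n₁ n₂ : ℕ} (h₁ : m ≤ n₁) (h₂ : m ≤ n₂) :
    l.toExposed (ppVertices m n₁) ⊆ l'.toExposed (ppVertices m n₁) ↔
      l.toExposed (ppVertices m n₂) ⊆ l'.toExposed (ppVertices m n₂) := by
  suffices h : ∀ n, m ≤ n → (l.toExposed (ppVertices m n) ⊆ l'.toExposed (ppVertices m n) ↔
      l.toExposed (ppVertices m m) ⊆ l'.toExposed (ppVertices m m)) by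
    rw [h n₁ h₁, h n₂ h₂]
  intro n hmn
  induction n, hmn using Nat.le_induction with
  | base => rfl
  | succ n hmn ih => rw [← toExposed_subset_iff_succ hmn, ih]

end Transfer

theorem partialPermutohedron_combinatorially_equivalent_general
    (m : ℕ) (n₁ n₂ : ℕ) (h₁ : m ≤ n₁) (h₂ : m ≤ n₂) :
    ∃ e : {F : Set (Fin m → ℝ) // F.Nonempty ∧ Convex ℝ F ∧
            IsExtreme ℝ (partialPermutohedron m n₁) F} ≃
          {F : Set (Fin m → ℝ) // F.Nonempty ∧ Convex ℝ F ∧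
            IsExtreme ℝ (partialPermutohedron m n₂) F},
      ∀ F G, F.1 ⊆ G.1 ↔ (e F).1 ⊆ (e G).1 := by
  let faces (n : ℕ) := Equiv.subtypeEquivRight fun F => isExtreme_convexHull_iff_exists_toExposed
    (F := F) (ppVertices_finite m n) ⟨0, zero_mem_ppVertices m n⟩
  let iso := OrderIso.rangeOfLeIff
    (fun l : StrongDual ℝ (Fin m → ℝ) => l.toExposed (partialPermutohedron m n₁))
    (fun l => l.toExposed (partialPermutohedron m n₂)) fun l l' => by
      simp only [partialPermutohedron, ContinuousLinearMap.toExposed_convexHull_subset_iff]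
      exact toExposed_subset_iff_of_le h₁ h₂
  refine ⟨(faces n₁).trans (iso.toEquiv.trans (faces n₂).symm), fun F G => ?_⟩
  exact (iso.le_iff_le (x := faces n₁ F) (y := faces n₁ G)).symm

/-- For fixed `m`, all partial permutohedra `P(m,n)` with `n ≥ m` are
combinatorially equivalent: there is an inclusion-preserving bijection (in
both directions) between their nonempty faces. -/
theorem partialPermutohedron_combinatorially_equivalent
    (m : ℕ) (hm : 0 < m) (n₁ n₂ : ℕ) (h₁ : m ≤ n₁) (h₂ : m ≤ n₂) :
    ∃ e : {F : Set (Fin m → ℝ) // F.Nonempty ∧ Convex ℝ F ∧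
            IsExtreme ℝ (partialPermutohedron m n₁) F} ≃
          {F : Set (Fin m → ℝ) // F.Nonempty ∧ Convex ℝ F ∧
            IsExtreme ℝ (partialPermutohedron m n₂) F},
      ∀ F G, F.1 ⊆ G.1 ↔ (e F).1 ⊆ (e G).1 :=
  partialPermutohedron_combinatorially_equivalent_general m n₁ n₂ h₁ h₂
end

section
/- Let m be a positive integer and z ∈ ℝ^m with z_1 ≥ z_2 ≥ … ≥ z_m ≥ 0. Then a point x ∈ ℝ^m is an extreme point of the anti-blocking polytope Π̂(z) if and only if there exist an integer k with 0 ≤ k ≤ m and an injective map φ : {1,…,k} → {1,…,m} such that x_{φ(i)} = z_i for all i ∈ {1,…,k} and x_j = 0 for all j ∈ {1,…,m} not in the image of φ. -/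
/-!
Write `F r = z₁ + ⋯ + z_r`. Every `y ∈ Π̂(z)` satisfies `∑_{j ∈ A} y_j ≤ F |A|`: this holds for
the permuted copies of `z` because `z` is antitone, hence on `Π(z)` and below it.

A point placing `z₁, …, z_k` at the positions `S` via `τ` attains this bound on the sets
`{j ∈ S | τ j < r}` and `{j ∈ S | τ j ≤ r}`; any `y ∈ Π̂(z)` on all these supporting hyperplanes
and on `y_j = 0` for `j ∉ S` equals it, so it is extreme.

Conversely, `Π̂(z)` lies in the hull of these top placements. A point below `y ∈ Π(z)` is in the
hull of the restrictions of `y` to subsets of coordinates, hence in the hull of placements of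
arbitrary distinct entries of `z`. If such a placement leaves a smaller index `i` unused while using
`τ j > i`, it lies on the segment between the placement with position `j` emptied and the one with
`τ j` replaced by `i`, and both decrease `∑_{j ∈ S} (τ j + 1)`.
-/

/-- The permutohedron `Π(z)`: the convex hull of all vectors obtained by
permuting the coordinates of `z`. -/
def permutohedron {m : ℕ} (z : Fin m → ℝ) : Set (Fin m → ℝ) :=
  convexHull ℝ {x | ∃ σ : Equiv.Perm (Fin m), ∀ i, x i = z (σ i)}

/-- The anti-blocking polytope `Π̂(z)`: all points `x` with `0 ≤ x ≤ y`
coordinatewise for some `y ∈ Π(z)`. -/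
def antiBlocking {m : ℕ} (z : Fin m → ℝ) : Set (Fin m → ℝ) :=
  {x | ∃ y ∈ permutohedron z, ∀ i, 0 ≤ x i ∧ x i ≤ y i}

open Finset Function

theorem mem_extremePoints_of_forall_supporting {𝕜 E : Type*} [Field 𝕜] [LinearOrder 𝕜]
    [IsStrictOrderedRing 𝕜] [AddCommGroup E] [Module 𝕜 E] {K : Set E} {x : E} (hx : x ∈ K)
    (h : ∀ y ∈ K, (∀ ℓ : E →ₗ[𝕜] 𝕜, (∀ w ∈ K, ℓ w ≤ ℓ x) → ℓ y = ℓ x) → y = x) :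
    x ∈ K.extremePoints 𝕜 := by
  refine mem_extremePoints.2 ⟨hx, fun y₁ hy₁ y₂ hy₂ hseg => ?_⟩
  have key : ∀ ℓ : E →ₗ[𝕜] 𝕜, (∀ w ∈ K, ℓ w ≤ ℓ x) → ℓ y₁ = ℓ x ∧ ℓ y₂ = ℓ x := by
    intro ℓ hℓ
    have h₁ := hℓ y₁ hy₁
    have h₂ := hℓ y₂ hy₂
    obtain ⟨a, b, ha, hb, hab, rfl⟩ := hseg
    obtain rfl : a = 1 - b := eq_sub_of_add_eq hab
    simp only [map_add, map_smul, smul_eq_mul] at h₁ h₂ ⊢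
    have hle : ℓ y₁ ≤ ℓ y₂ := le_of_mul_le_mul_left (by linarith) hb
    have hge : ℓ y₂ ≤ ℓ y₁ := le_of_mul_le_mul_left (by linarith) ha
    rw [le_antisymm hle hge]
    constructor <;> ring
  exact ⟨h y₁ hy₁ fun ℓ hℓ => (key ℓ hℓ).1, h y₂ hy₂ fun ℓ hℓ => (key ℓ hℓ).2⟩

theorem mem_convexHull_indicator_of_le {ι : Type*} [Fintype ι] {x y : ι → ℝ} (h0 : 0 ≤ x)
    (hxy : x ≤ y) :
    x ∈ convexHull ℝ (Set.range fun T : Finset ι => (T : Set ι).indicator y) := by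
  have hx : x ∈ convexHull ℝ (Set.univ.pi fun j => ({0, y j} : Set ℝ)) :=
    mem_convexHull_pi fun j _ => by
      rw [convexHull_pair, segment_eq_Icc (show (0 : ℝ) ≤ y j from (h0 j).trans (hxy j))]
      exact ⟨h0 j, hxy j⟩
  refine convexHull_mono ?_ hx
  intro c hc
  refine ⟨univ.filter (c · ≠ 0), funext fun j => ?_⟩
  have := hc j (Set.mem_univ j)
  by_cases h : c j = 0 <;> simp_all

theorem Antitone.sum_le_sum_of_isLowerSet {α β : Type*} [LinearOrder α] [AddCommMonoid β]
    [PartialOrder β] [IsOrderedAddMonoid β] {f : α → β} (hf : Antitone f) {s t : Finset α}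
    (ht : IsLowerSet (t : Set α)) (hst : #s = #t) :
    ∑ i ∈ s, f i ≤ ∑ i ∈ t, f i := by
  have hlt : ∀ a ∈ s \ t, ∀ b ∈ t \ s, b < a := fun a ha b hb =>
    lt_of_not_ge fun hab => (mem_sdiff.1 ha).2 (ht hab (mem_sdiff.1 hb).1)
  have hcard : #(s \ t) = #(t \ s) := card_sdiff_comm hst
  have key : ∑ i ∈ s \ t, f i ≤ ∑ i ∈ t \ s, f i := by
    rcases (t \ s).eq_empty_or_nonempty with h | h
    · rw [card_eq_zero.1 (hcard.trans (by rw [h, card_empty])), h]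
    calc ∑ i ∈ s \ t, f i
        ≤ #(s \ t) • f ((t \ s).max' h) :=
          sum_le_card_nsmul _ _ _ fun a ha => hf (hlt a ha _ (max'_mem _ h)).le
      _ = #(t \ s) • f ((t \ s).max' h) := by rw [hcard]
      _ ≤ ∑ i ∈ t \ s, f i := card_nsmul_le_sum _ _ _ fun b hb => hf (le_max' _ b hb)
  calc ∑ i ∈ s, f i = ∑ i ∈ s ∩ t, f i + ∑ i ∈ s \ t, f i := (sum_inter_add_sum_sdiff s t f).symm
    _ ≤ ∑ i ∈ t ∩ s, f i + ∑ i ∈ t \ s, f i := by rw [inter_comm]; gcongr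
    _ = ∑ i ∈ t, f i := sum_inter_add_sum_sdiff t s f

theorem Fin.mem_iff_lt_card_of_isLowerSet {m : ℕ} {T : Finset (Fin m)}
    (hT : IsLowerSet (T : Set (Fin m))) {i : Fin m} : i ∈ T ↔ (i : ℕ) < #T := by
  constructor
  · intro hi
    calc (i : ℕ) < #(Iic i) := by simp
      _ ≤ #T := card_le_card fun a ha => hT (mem_Iic.1 ha) hi
  · intro h
    by_contra hi
    have : #T ≤ #(Iio i) :=
      card_le_card fun a ha => mem_Iio.2 (lt_of_not_ge fun hia => hi (hT hia ha))
    simp only [Fin.card_Iio] at this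
    omega

theorem Set.InjOn.update {α β : Type*} [DecidableEq α] {f : α → β} {s : Set α} (hf : s.InjOn f)
    (a : α) {b : β} (hb : b ∉ f '' s) : s.InjOn (update f a b) := by
  intro x hx y hy hxy
  by_cases hxa : x = a <;> by_cases hya : y = a
  · rw [hxa, hya]
  · simp only [hxa, update_self, update_of_ne hya] at hxy
    exact absurd ⟨y, hy, hxy.symm⟩ hb
  · simp only [hya, update_self, update_of_ne hxa] at hxy
    exact absurd ⟨x, hx, hxy⟩ hb
  · simp only [update_of_ne hxa, update_of_ne hya] at hxy
    exact hf hx hy hxy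

/-- Position `j ∈ S` carries `z (τ j)`; as `τ '' S` is a lower set, these are the `#S` largest
entries of `z` when `z` is antitone. -/
def topPlacements {m : ℕ} (z : Fin m → ℝ) : Set (Fin m → ℝ) :=
  {x | ∃ (S : Finset (Fin m)) (τ : Fin m → Fin m), Set.InjOn τ S ∧ IsLowerSet (τ '' S) ∧
    (S : Set (Fin m)).indicator (z ∘ τ) = x}

section
variable {m : ℕ} {z : Fin m → ℝ}

theorem convex_antiBlocking : Convex ℝ (antiBlocking z) := by
  rintro x₁ ⟨y₁, hy₁, h₁⟩ x₂ ⟨y₂, hy₂, h₂⟩ a b ha hb hab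
  refine ⟨a • y₁ + b • y₂, convex_convexHull ℝ _ hy₁ hy₂ ha hb hab, fun i => ?_⟩
  simp only [Pi.add_apply, Pi.smul_apply, smul_eq_mul]
  obtain ⟨h₁0, h₁y⟩ := h₁ i
  obtain ⟨h₂0, h₂y⟩ := h₂ i
  exact ⟨by positivity, add_le_add (mul_le_mul_of_nonneg_left h₁y ha)
    (mul_le_mul_of_nonneg_left h₂y hb)⟩

theorem indicator_comp_mem_antiBlocking (hz0 : ∀ i, 0 ≤ z i) {S : Finset (Fin m)}
    {τ : Fin m → Fin m} (hτ : Set.InjOn τ S) :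
    (S : Set (Fin m)).indicator (z ∘ τ) ∈ antiBlocking z := by
  obtain ⟨g, hg⟩ := exists_equiv_extend_of_card_eq (t := univ) (by simp) (subset_univ _) hτ
  refine ⟨fun j => z (g j), subset_convexHull ℝ _ ⟨g.trans (Equiv.subtypeUnivEquiv mem_univ),
    fun _ => rfl⟩, fun j => ?_⟩
  by_cases hj : j ∈ S
  · simp [Set.indicator_of_mem (mem_coe.2 hj), hg j hj, hz0]
  · simp [Set.indicator_of_notMem (show j ∉ (S : Set (Fin m)) by simpa using hj), hz0]

theorem sum_le_sum_of_mem_antiBlocking (hz : Antitone z) {y : Fin m → ℝ}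
    (hy : y ∈ antiBlocking z) {A B : Finset (Fin m)} (hB : IsLowerSet (B : Set (Fin m)))
    (hAB : #A = #B) : ∑ j ∈ A, y j ≤ ∑ i ∈ B, z i := by
  obtain ⟨w, hw, hyw⟩ := hy
  refine (sum_le_sum fun j _ => (hyw j).2).trans ?_
  refine convexHull_min ?_ (convex_halfSpace_le (f := fun w : Fin m → ℝ => ∑ j ∈ A, w j) ?_ _) hw
  · rintro w ⟨σ, hσ⟩
    simpa [hσ] using hz.sum_le_sum_of_isLowerSet (s := A.map σ.toEmbedding) hB
      (by rw [card_map, hAB])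
  · exact ⟨fun u v => sum_add_distrib, fun c u => (mul_sum A u c).symm⟩

theorem sum_le_sum_indicator_comp (hz : Antitone z) {y : Fin m → ℝ} (hy : y ∈ antiBlocking z)
    {S A : Finset (Fin m)} {τ : Fin m → Fin m} (hτ : Set.InjOn τ S) (hAS : A ⊆ S)
    (hA : IsLowerSet (τ '' A)) :
    ∑ j ∈ A, y j ≤ ∑ j ∈ A, (S : Set (Fin m)).indicator (z ∘ τ) j := by
  have hτA : Set.InjOn τ A := hτ.mono (coe_subset.2 hAS)
  rw [sum_congr rfl fun j hj => Set.indicator_of_mem (mem_coe.2 (hAS hj)) _]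
  rw [show ∑ j ∈ A, (z ∘ τ) j = ∑ i ∈ A.image τ, z i from (sum_image hτA).symm]
  exact sum_le_sum_of_mem_antiBlocking hz hy (by rwa [coe_image])
    (card_image_of_injOn hτA).symm

theorem indicator_comp_mem_extremePoints (hz : Antitone z) (hz0 : ∀ i, 0 ≤ z i)
    {S : Finset (Fin m)} {τ : Fin m → Fin m} (hτ : Set.InjOn τ S) (hS : IsLowerSet (τ '' S)) :
    (S : Set (Fin m)).indicator (z ∘ τ) ∈ (antiBlocking z).extremePoints ℝ := by
  set x := (S : Set (Fin m)).indicator (z ∘ τ)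
  refine mem_extremePoints_of_forall_supporting (indicator_comp_mem_antiBlocking hz0 hτ)
    fun y _ hsupp => funext fun j => ?_
  have hsum : ∀ L : Finset (Fin m), IsLowerSet (L : Set (Fin m)) →
      ∑ j ∈ S.filter (τ · ∈ L), y j = ∑ j ∈ S.filter (τ · ∈ L), x j := by
    intro L hL
    have hA : IsLowerSet (τ '' ↑(S.filter (τ · ∈ L))) := by
      rw [coe_filter]
      exact (Set.image_inter_preimage τ S L).symm ▸ hS.inter hL
    simpa using hsupp (∑ j ∈ S.filter (τ · ∈ L), LinearMap.proj j) fun w hw => by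
      simpa using sum_le_sum_indicator_comp hz hw hτ (filter_subset _ _) hA
  by_cases hj : j ∈ S
  · have hjA : j ∉ S.filter (τ · ∈ Iio (τ j)) := by simp
    have hins : insert j (S.filter (τ · ∈ Iio (τ j))) = S.filter (τ · ∈ Iic (τ j)) := by
      ext a
      simp only [mem_insert, mem_filter, mem_Iio, mem_Iic]
      constructor
      · rintro (rfl | ⟨ha, hlt⟩)
        exacts [⟨hj, le_rfl⟩, ⟨ha, hlt.le⟩]
      · rintro ⟨ha, hle⟩
        rcases hle.lt_or_eq with hlt | heq
        exacts [Or.inr ⟨ha, hlt⟩, Or.inl (hτ ha hj heq)]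
    have hlt := hsum _ (coe_Iio (τ j) ▸ isLowerSet_Iio (τ j))
    have hle := hsum _ (coe_Iic (τ j) ▸ isLowerSet_Iic (τ j))
    rw [← hins, sum_insert hjA, sum_insert hjA] at hle
    linarith
  · have hxj : x j = 0 := Set.indicator_of_notMem (by simpa using hj) _
    simpa [hxj] using hsupp (-LinearMap.proj j) fun w ⟨_, _, hw⟩ => by simpa [hxj] using (hw j).1

theorem indicator_comp_mem_segment {S : Finset (Fin m)} {τ : Fin m → Fin m} {j : Fin m}
    (hj : j ∈ S) {i : Fin m} (h0 : 0 ≤ z (τ j)) (hi : z (τ j) ≤ z i) :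
    (S : Set (Fin m)).indicator (z ∘ τ) ∈
      segment ℝ (((S.erase j : Finset (Fin m)) : Set (Fin m)).indicator (z ∘ τ))
        ((S : Set (Fin m)).indicator (z ∘ update τ j i)) := by
  set x := (S : Set (Fin m)).indicator (z ∘ τ)
  have herase : ((S.erase j : Finset (Fin m)) : Set (Fin m)).indicator (z ∘ τ) = update x j 0 := by
    ext a
    by_cases ha : a = j
    · subst ha; simp
    · by_cases haS : a ∈ S <;> simp [x, ha, haS]
  have hupdate : (S : Set (Fin m)).indicator (z ∘ update τ j i) = update x j (z i) := by
    ext a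
    by_cases ha : a = j
    · subst ha; simp [hj]
    · by_cases haS : a ∈ S <;> simp [x, ha, haS]
  rw [herase, hupdate, ← Pi.image_update_segment, segment_eq_Icc (h0.trans hi)]
  exact ⟨z (τ j), ⟨h0, hi⟩, by simp [x, hj]⟩

theorem indicator_comp_mem_convexHull_topPlacements (hz : Antitone z) (hz0 : ∀ i, 0 ≤ z i)
    (S : Finset (Fin m)) (τ : Fin m → Fin m) (hτ : Set.InjOn τ S) :
    (S : Set (Fin m)).indicator (z ∘ τ) ∈ convexHull ℝ (topPlacements z) := by
  by_cases hS : IsLowerSet (τ '' S)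
  · exact subset_convexHull ℝ _ ⟨S, τ, hτ, hS, rfl⟩
  obtain ⟨i, j, hij, hj, hiS⟩ : ∃ i j, i ≤ τ j ∧ j ∈ S ∧ ∀ j' ∈ S, τ j' ≠ i := by
    simpa [IsLowerSet] using hS
  replace hiS : i ∉ τ '' S := fun ⟨j', hj', h⟩ => hiS j' hj' h
  have hlt : i < τ j := hij.lt_of_ne fun h => hiS ⟨j, hj, h.symm⟩
  have herase := indicator_comp_mem_convexHull_topPlacements hz hz0 (S.erase j) τ
    (hτ.mono (by simp))
  have hupdate := indicator_comp_mem_convexHull_topPlacements hz hz0 S (update τ j i)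
    (hτ.update j hiS)
  exact (convex_convexHull ℝ _).segment_subset herase hupdate
    (indicator_comp_mem_segment hj (hz0 _) (hz hij))
termination_by ∑ j ∈ S, ((τ j : ℕ) + 1)
decreasing_by
  · exact sum_erase_lt_of_pos hj (Nat.succ_pos _)
  · refine sum_lt_sum (fun a _ => ?_) ⟨j, hj, by simpa using hlt⟩
    rcases eq_or_ne a j with rfl | ha
    · simpa using hij
    · simp [ha]

theorem antiBlocking_eq_convexHull_topPlacements (hz : Antitone z) (hz0 : ∀ i, 0 ≤ z i) :
    antiBlocking z = convexHull ℝ (topPlacements z) := by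
  refine subset_antisymm ?_ (convexHull_min ?_ convex_antiBlocking)
  · rintro x ⟨y, hy, hxy⟩
    refine convexHull_min ?_ (convex_convexHull ℝ _)
      (mem_convexHull_indicator_of_le (fun j => (hxy j).1) fun j => (hxy j).2)
    rintro _ ⟨T, rfl⟩
    have hT : permutohedron z ⊆
        (fun w => (T : Set (Fin m)).indicator w) ⁻¹' convexHull ℝ (topPlacements z) := by
      refine convexHull_min ?_ ((convex_convexHull ℝ _).is_linear_preimage
        ⟨fun u v => Set.indicator_add' _ u v, fun c u => Set.indicator_const_smul _ c u⟩)
      rintro w ⟨σ, hσ⟩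
      obtain rfl : w = z ∘ σ := funext hσ
      exact indicator_comp_mem_convexHull_topPlacements hz hz0 T σ σ.injective.injOn
    exact hT hy
  · rintro _ ⟨S, τ, hτ, -, rfl⟩
    exact indicator_comp_mem_antiBlocking hz0 hτ

theorem extremePoints_antiBlocking_eq_topPlacements (hz : Antitone z) (hz0 : ∀ i, 0 ≤ z i) :
    (antiBlocking z).extremePoints ℝ = topPlacements z := by
  refine subset_antisymm ?_ ?_
  · rw [antiBlocking_eq_convexHull_topPlacements hz hz0]
    exact extremePoints_convexHull_subset
  · rintro _ ⟨S, τ, hτ, hS, rfl⟩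
    exact indicator_comp_mem_extremePoints hz hz0 hτ hS

theorem mem_topPlacements_iff {x : Fin m → ℝ} :
    x ∈ topPlacements z ↔ ∃ (k : ℕ) (hk : k ≤ m) (φ : Fin k → Fin m), Injective φ ∧
      (∀ i : Fin k, x (φ i) = z (Fin.castLE hk i)) ∧
      (∀ j : Fin m, (∀ i : Fin k, φ i ≠ j) → x j = 0) := by
  constructor
  · rintro ⟨S, τ, hτ, hS, rfl⟩
    have hT : IsLowerSet ((S.image τ : Finset (Fin m)) : Set (Fin m)) := by rwa [coe_image]
    have hk : #(S.image τ) ≤ m := (card_le_univ _).trans_eq (Fintype.card_fin m)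
    have hφ : ∀ i : Fin #(S.image τ), ∃ j ∈ S, τ j = Fin.castLE hk i := fun i =>
      mem_image.1 ((Fin.mem_iff_lt_card_of_isLowerSet hT).2 i.isLt)
    choose φ hφS hφτ using hφ
    refine ⟨_, hk, φ, fun a b hab => Fin.castLE_injective hk ?_, fun i => ?_, fun j hj => ?_⟩
    · rw [← hφτ, ← hφτ, hab]
    · simp [Set.indicator_of_mem (mem_coe.2 (hφS i)), hφτ]
    · refine Set.indicator_of_notMem (fun hjS => ?_) _
      have hlt := (Fin.mem_iff_lt_card_of_isLowerSet hT).1 (mem_image_of_mem τ hjS)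
      exact hj ⟨τ j, hlt⟩ (hτ (hφS _) hjS (by rw [hφτ]; rfl))
  · rintro ⟨k, hk, φ, hφ, hval, hzero⟩
    have hS : ((univ.image φ : Finset (Fin m)) : Set (Fin m)) = Set.range φ := by simp
    refine ⟨univ.image φ, extend φ (Fin.castLE hk) id, ?_, ?_, ?_⟩ <;> rw [hS]
    · rintro _ ⟨a, rfl⟩ _ ⟨b, rfl⟩ hab
      simp only [hφ.extend_apply] at hab
      rw [Fin.castLE_injective hk hab]
    · rw [← Set.range_comp, extend_comp hφ, Fin.range_castLE]
      exact fun a b hba (ha : (a : ℕ) < k) => lt_of_le_of_lt (Fin.le_iff_val_le_val.1 hba) ha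
    · ext j
      by_cases hj : j ∈ Set.range φ
      · obtain ⟨i, rfl⟩ := hj
        simp [hφ.extend_apply, hval]
      · rw [Set.indicator_of_notMem hj, hzero j fun i h => hj ⟨i, h⟩]

end

theorem extremePoints_antiBlocking_general (m : ℕ) (z : Fin m → ℝ)
    (hmono : ∀ i j : Fin m, i ≤ j → z j ≤ z i) (hpos : ∀ i, 0 ≤ z i)
    (x : Fin m → ℝ) :
    x ∈ Set.extremePoints ℝ (antiBlocking z) ↔
      ∃ (k : ℕ) (hk : k ≤ m) (φ : Fin k → Fin m), Function.Injective φ ∧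
        (∀ i : Fin k, x (φ i) = z (Fin.castLE hk i)) ∧
        (∀ j : Fin m, (∀ i : Fin k, φ i ≠ j) → x j = 0) := by
  rw [extremePoints_antiBlocking_eq_topPlacements (fun i j => hmono i j) hpos]
  exact mem_topPlacements_iff

/-- For `z₁ ≥ z₂ ≥ … ≥ z_m ≥ 0`, the extreme points of `Π̂(z)` are exactly the
vectors placing `z₁,…,z_k` injectively into `k` positions (for some
`0 ≤ k ≤ m`) and `0` elsewhere. -/
theorem extremePoints_antiBlocking (m : ℕ) (hm : 0 < m) (z : Fin m → ℝ)
    (hmono : ∀ i j : Fin m, i ≤ j → z j ≤ z i) (hpos : ∀ i, 0 ≤ z i)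
    (x : Fin m → ℝ) :
    x ∈ Set.extremePoints ℝ (antiBlocking z) ↔
      ∃ (k : ℕ) (hk : k ≤ m) (φ : Fin k → Fin m), Function.Injective φ ∧
        (∀ i : Fin k, x (φ i) = z (Fin.castLE hk i)) ∧
        (∀ j : Fin m, (∀ i : Fin k, φ i ≠ j) → x j = 0) :=
  extremePoints_antiBlocking_general m z hmono hpos x
end

section
/- For all positive integers m and n, the partial permutohedron is an anti-blocking polytope: if n ≤ m−2 then P(m,n) = Π̂(z) where z = (n, n−1, …, 2, 1, 0, …, 0) ∈ ℝ^m has i-th coordinate max(n−i+1, 0) (with m−n trailing zeros); and if n ≥ m−1 then P(m,n) = Π̂(z) where z = (n, n−1, …, n−m+1) ∈ ℝ^m has i-th coordinate n−i+1. -/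
lemma cast_nat_sub_eq_max (a b : ℕ) : ((a - b : ℕ) : ℝ) = max ((a : ℝ) - b) 0 := by
  rcases le_total b a with h | h
  · rw [Nat.cast_sub h]
    exact (max_eq_left (by simpa using (Nat.cast_le (α := ℝ)).2 h)).symm
  · rw [Nat.sub_eq_zero_of_le h, Nat.cast_zero]
    exact (max_eq_right (by simpa using (Nat.cast_le (α := ℝ)).2 h)).symm

lemma antiBlocking_convex {m : ℕ} (z : Fin m → ℝ) : Convex ℝ (antiBlocking z) := by
  rintro x ⟨u, hu, hxu⟩ y ⟨v, hv, hyv⟩ a b ha hb hab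
  refine ⟨a • u + b • v, (convex_convexHull ℝ _) hu hv ha hb hab, fun i => ?_⟩
  have h1 := hxu i; have h2 := hyv i
  constructor
  · have : (0:ℝ) ≤ a * x i + b * y i :=
      add_nonneg (mul_nonneg ha h1.1) (mul_nonneg hb h2.1)
    simpa [smul_eq_mul] using this
  · have : a * x i + b * y i ≤ a * u i + b * v i :=
      add_le_add (mul_le_mul_of_nonneg_left h1.2 ha) (mul_le_mul_of_nonneg_left h2.2 hb)
    simpa [smul_eq_mul] using this

lemma box_subset_hull {m n : ℕ} {z : Fin m → ℝ} (hz : z ∈ ppVertices m n)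
    (h0 : ∀ i, 0 ≤ z i) (σ : Equiv.Perm (Fin m)) :
    {x : Fin m → ℝ | ∀ i, 0 ≤ x i ∧ x i ≤ z (σ i)} ⊆ partialPermutohedron m n := by
  intro x hx
  have hxmem : x ∈ convexHull ℝ (Set.pi Set.univ (fun i => ({0, z (σ i)} : Set ℝ))) := by
    rw [convexHull_pi]
    intro i _
    show x i ∈ convexHull ℝ ({0, z (σ i)} : Set ℝ)
    rw [convexHull_pair, segment_eq_Icc (h0 (σ i))]
    exact ⟨(hx i).1, (hx i).2⟩
  refine convexHull_mono ?_ hxmem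
  intro w hw
  have hw' : ∀ i, w i = 0 ∨ w i = z (σ i) := fun i => by
    have := hw i (Set.mem_univ i); simpa using this
  constructor
  · intro i
    rcases hw' i with h | h
    · exact ⟨0, Nat.zero_le n, by simp [h]⟩
    · obtain ⟨k, hk, hzk⟩ := hz.1 (σ i)
      exact ⟨k, hk, by rw [h, hzk]⟩
  · intro i j hij hi hj
    rcases hw' i with h | h
    · exact absurd h hi
    rcases hw' j with h' | h'
    · exact absurd h' hj
    rw [h, h']
    exact hz.2 (σ i) (σ j) (fun hh => hij (σ.injective hh)) (h ▸ hi) (h' ▸ hj)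

lemma main_eq {m n : ℕ} {z : Fin m → ℝ} (hz : z ∈ ppVertices m n)
    (hdom : ∀ x ∈ ppVertices m n, ∃ σ : Equiv.Perm (Fin m), ∀ i, x i ≤ z (σ i)) :
    partialPermutohedron m n = antiBlocking z := by
  have h0 : ∀ i, 0 ≤ z i := by
    intro i; obtain ⟨k, _, hk⟩ := hz.1 i; rw [hk]; positivity
  apply Set.Subset.antisymm
  · apply convexHull_min _ (antiBlocking_convex z)
    intro x hx
    obtain ⟨σ, hσ⟩ := hdom x hx
    refine ⟨fun i => z (σ i), subset_convexHull ℝ _ ⟨σ, fun i => rfl⟩, fun i => ⟨?_, hσ i⟩⟩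
    obtain ⟨k, _, hk⟩ := hx.1 i; rw [hk]; positivity
  · rintro x ⟨y, hy, hxy⟩
    obtain ⟨ι, _, w, p, hw0, hw1, hp, hyp⟩ := mem_convexHull_iff_exists_fintype.1 hy
    have hy0 : ∀ i, y i = 0 → x i = 0 := fun i h =>
      le_antisymm (h ▸ (hxy i).2) (hxy i).1
    set q : ι → (Fin m → ℝ) := fun t i => if y i = 0 then 0 else p t i * (x i / y i) with hq
    have hsum : ∑ t, w t • q t = x := by
      funext i
      rw [Finset.sum_apply]
      rcases eq_or_ne (y i) 0 with h | h
      · simp [hq, h, hy0 i h]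
      · have hyi : ∑ t, w t * p t i = y i := by
          have := congrFun hyp i
          simpa [Finset.sum_apply] using this
        calc ∑ t, (w t • q t) i = ∑ t, (w t * p t i) * (x i / y i) := by
              simp [hq, h]; ring_nf; exact Finset.sum_congr rfl fun t _ => by ring
          _ = (∑ t, w t * p t i) * (x i / y i) := (Finset.sum_mul _ _ _).symm
          _ = x i := by rw [hyi]; field_simp
    rw [← hsum]
    apply Convex.sum_mem (convex_convexHull ℝ _) (fun t _ => hw0 t) hw1
    intro t _
    obtain ⟨σ, hσ⟩ := hp t
    apply box_subset_hull hz h0 σ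
    intro i
    rcases eq_or_ne (y i) 0 with h | h
    · simp [hq, h, h0 (σ i)]
    · have hyipos : 0 < y i := lt_of_le_of_ne (le_trans (hxy i).1 (hxy i).2) (Ne.symm h)
      have hdiv : x i / y i ≤ 1 := (div_le_one hyipos).2 (hxy i).2
      have hdiv0 : 0 ≤ x i / y i := div_nonneg (hxy i).1 hyipos.le
      have hp0 : 0 ≤ p t i := by rw [hσ i]; exact h0 (σ i)
      constructor
      · simp only [hq, if_neg h]; exact mul_nonneg hp0 hdiv0
      · simp only [hq, if_neg h]
        calc p t i * (x i / y i) ≤ p t i * 1 := mul_le_mul_of_nonneg_left hdiv hp0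
          _ = z (σ i) := by rw [mul_one, hσ i]

lemma sorted_bound {m n : ℕ} {x : Fin m → ℝ} (hx : x ∈ ppVertices m n) (j : Fin m) :
    x (Tuple.sort x j) ≤ ((n - (m - 1 - (j : ℕ)) : ℕ) : ℝ) := by
  choose k hkn hxk using hx.1
  by_contra hcon
  push_neg at hcon
  set a := k (Tuple.sort x j) with ha
  have hcast : ((n - (m - 1 - (j : ℕ)) : ℕ) : ℝ) < (a : ℝ) := by
    rw [ha, ← hxk]; exact hcon
  have hlt : n - (m - 1 - (j : ℕ)) < a := Nat.cast_lt.mp hcast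
  have hapos : 0 < a := lt_of_le_of_lt (Nat.zero_le _) hlt
  have hmaps : ∀ l ∈ Finset.Ici j, k (Tuple.sort x l) ∈ Finset.Icc a n := by
    intro l hl
    have hjl : j ≤ l := Finset.mem_Ici.mp hl
    have hmono := Tuple.monotone_sort x hjl
    rw [Function.comp_apply, Function.comp_apply, hxk, hxk] at hmono
    exact Finset.mem_Icc.mpr ⟨Nat.cast_le.mp hmono, hkn _⟩
  have hinj : Set.InjOn (fun l => k (Tuple.sort x l)) (Finset.Ici j) := by
    intro l₁ hl₁ l₂ hl₂ heq
    by_contra hne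
    have h1 : a ≤ k (Tuple.sort x l₁) := (Finset.mem_Icc.mp (hmaps l₁ hl₁)).1
    have h2 : a ≤ k (Tuple.sort x l₂) := (Finset.mem_Icc.mp (hmaps l₂ hl₂)).1
    have hs : Tuple.sort x l₁ ≠ Tuple.sort x l₂ :=
      fun hh => hne ((Tuple.sort x).injective hh)
    have hx1 : x (Tuple.sort x l₁) ≠ 0 := by
      rw [hxk]; exact Nat.cast_ne_zero.mpr (by omega)
    have hx2 : x (Tuple.sort x l₂) ≠ 0 := by
      rw [hxk]; exact Nat.cast_ne_zero.mpr (by omega)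
    have heq' : x (Tuple.sort x l₁) = x (Tuple.sort x l₂) := by
      rw [hxk, hxk]; exact_mod_cast heq
    exact hx.2 _ _ hs hx1 hx2 heq'
  have hcard := Finset.card_le_card_of_injOn _ hmaps hinj
  rw [Fin.card_Ici, Nat.card_Icc] at hcard
  have hj : (j : ℕ) < m := j.isLt
  omega

lemma dom_gen {m n : ℕ} {z : Fin m → ℝ}
    (hzb : ∀ j : Fin m, ((n - (m - 1 - (j : ℕ)) : ℕ) : ℝ) ≤ z (Fin.rev j))
    {x : Fin m → ℝ} (hx : x ∈ ppVertices m n) :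
    ∃ σ : Equiv.Perm (Fin m), ∀ i, x i ≤ z (σ i) := by
  refine ⟨((Tuple.sort x)⁻¹ : Equiv.Perm (Fin m)).trans Fin.revPerm, fun i => ?_⟩
  have h1 := sorted_bound hx ((Tuple.sort x)⁻¹ i)
  have h2 : Tuple.sort x ((Tuple.sort x)⁻¹ i) = i := Equiv.apply_symm_apply _ _
  rw [h2] at h1
  exact le_trans h1 (hzb _)

/-- `P(m,n)` is an anti-blocking polytope: for `n ≤ m-2` it is
`Π̂(n, n-1, …, 1, 0, …, 0)` (whose `i`-th coordinate, 0-indexed, is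
`max (n - i) 0`), and for `n ≥ m-1` it is `Π̂(n, n-1, …, n-m+1)` (whose `i`-th
coordinate, 0-indexed, is `n - i`). -/
theorem partialPermutohedron_antiBlocking (m n : ℕ) (hm : 0 < m) (hn : 0 < n) :
    (n + 2 ≤ m → partialPermutohedron m n =
        antiBlocking (fun i : Fin m => max ((n : ℝ) - ((i : ℕ) : ℝ)) 0)) ∧
    (m - 1 ≤ n → partialPermutohedron m n =
        antiBlocking (fun i : Fin m => (n : ℝ) - ((i : ℕ) : ℝ))) := by
  constructor
  · intro hmn
    set z : Fin m → ℝ := fun i => max ((n : ℝ) - ((i : ℕ) : ℝ)) 0 with hzdef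
    have hzval : ∀ i : Fin m, z i = ((n - (i : ℕ) : ℕ) : ℝ) := fun i =>
      (cast_nat_sub_eq_max n i).symm
    have hz : z ∈ ppVertices m n := by
      constructor
      · intro i
        exact ⟨n - (i : ℕ), Nat.sub_le _ _, hzval i⟩
      · intro i j hij hi hj heq
        simp only [hzval] at hi hj heq
        have hi' : n - (i : ℕ) ≠ 0 := Nat.cast_ne_zero.mp hi
        have hj' : n - (j : ℕ) ≠ 0 := Nat.cast_ne_zero.mp hj
        have heq' : n - (i : ℕ) = n - (j : ℕ) := by exact_mod_cast heq
        exact hij (Fin.ext (by omega))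
    apply main_eq hz
    intro x hx
    apply dom_gen _ hx
    intro j
    rw [hzval (Fin.rev j)]
    have : ((Fin.rev j : Fin m) : ℕ) = m - 1 - (j : ℕ) := by
      rw [Fin.val_rev]; omega
    rw [this]
  · intro hmn
    set z : Fin m → ℝ := fun i => (n : ℝ) - ((i : ℕ) : ℝ) with hzdef
    have hzval : ∀ i : Fin m, z i = ((n - (i : ℕ) : ℕ) : ℝ) := by
      intro i
      have hi : (i : ℕ) ≤ n := by have := i.isLt; omega
      simp [hzdef, Nat.cast_sub hi]
    have hz : z ∈ ppVertices m n := by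
      constructor
      · intro i
        exact ⟨n - (i : ℕ), Nat.sub_le _ _, hzval i⟩
      · intro i j hij _ _
        intro heq
        have : ((i : ℕ) : ℝ) = ((j : ℕ) : ℝ) := by
          have : (n : ℝ) - ((i : ℕ) : ℝ) = (n : ℝ) - ((j : ℕ) : ℝ) := heq
          linarith
        exact hij (Fin.ext (by exact_mod_cast this))
    apply main_eq hz
    intro x hx
    apply dom_gen _ hx
    intro j
    rw [hzval (Fin.rev j)]
    have : ((Fin.rev j : Fin m) : ℕ) = m - 1 - (j : ℕ) := by
      rw [Fin.val_rev]; omega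
    rw [this]
end
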